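/- arXiv:2504.04197 — 11 statements merged into one kernel-verified Lean document; each statement's English description precedes it below -/
import Mathlib

section
/- If θ is sampled uniformly at random from the unit sphere S^{d-1} in R^d (d ≥ 3) and e_1 is any fixed unit vector, then for any α > 0, Pr[|θᵀe_1| ≤ α] ≤ α·√(d·e). -/
/-!
The cone `Ioo 0 1 • S` over `S = {θ | |⟪θ, u⟫| ≤ α}` lies in the slab
`{x ∈ ball 0 1 | |⟪x, u⟫| ≤ α}`. In dimension `n`, splitting `E = ℝ u ⊕ uᗮ` isometrically puts
the slab inside `[-α, α] × ball_{uᗮ} 0 1`, of volume `2α ω_{n-1}`, where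
`ω_k = √π ^ k / Γ(k/2 + 1)` is the volume of the unit `k`-ball. As `toSphere` weighs a set by `n`
times the volume of its cone, the ratio to the whole sphere is at most
`2α ω_{n-1} / ω_n = 2α Γ(n/2 + 1) / (√π Γ((n+1)/2))`, and log-convexity of `Γ`, in the form
`Γ(s + 1/2) ≤ √s Γ(s)`, bounds this by `α √(n e)`.
-/

open MeasureTheory Real Set Metric Module
open scoped RealInnerProductSpace Pointwise

theorem Real.Gamma_add_half_le_sqrt_mul_Gamma {s : ℝ} (hs : 0 < s) :
    Gamma (s + 1 / 2) ≤ √s * Gamma s := by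
  have h := Gamma_mul_add_mul_le_rpow_Gamma_mul_rpow_Gamma hs (by linarith : 0 < s + 1)
    one_half_pos one_half_pos (by norm_num)
  rw [Gamma_add_one hs.ne', mul_rpow hs.le (Gamma_pos_of_pos hs).le, mul_left_comm,
    ← rpow_add (Gamma_pos_of_pos hs), add_halves, rpow_one, ← sqrt_eq_rpow] at h
  convert h using 2
  ring

theorem two_mul_sqrt_pi_pow_div_Gamma_le (n : ℕ) :
    2 * (√π ^ n / Gamma (n / 2 + 1)) ≤
      √((n + 1) * exp 1) * (√π ^ (n + 1) / Gamma ((n + 1) / 2 + 1)) := by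
  set s : ℝ := n / 2 + 1
  have hs : 0 < s := by positivity
  have hΓ : Gamma ((n + 1) / 2 + 1) ≤ √s * Gamma s := by
    convert Gamma_add_half_le_sqrt_mul_Gamma hs using 2
    ring
  have hsqrt : 2 * √s ≤ √((n + 1) * exp 1) * √π := by
    have hexp : 2 < exp 1 := by linarith [add_one_lt_exp one_ne_zero]
    have : 4 * s ≤ (n + 1) * exp 1 * π := by
      have : 6 ≤ exp 1 * π := by nlinarith [pi_gt_three]
      simp only [s]
      nlinarith [n.cast_nonneg (α := ℝ)]
    rw [← sqrt_mul (by positivity), show (2 : ℝ) = √4 by norm_num, ← sqrt_mul (by norm_num)]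
    exact sqrt_le_sqrt this
  calc 2 * (√π ^ n / Gamma s) = 2 * √s * √π ^ n / (√s * Gamma s) := by field_simp
    _ ≤ √((n + 1) * exp 1) * √π * √π ^ n / Gamma ((n + 1) / 2 + 1) := by gcongr
    _ = _ := by ring

variable {E : Type*} [NormedAddCommGroup E] [InnerProductSpace ℝ E]

theorem Ioo_smul_image_abs_inner_le_subset (u : E) (α : ℝ) :
    Ioo (0 : ℝ) 1 • ((↑) '' {θ : sphere (0 : E) 1 | |⟪(θ : E), u⟫| ≤ α}) ⊆
      {x ∈ ball (0 : E) 1 | |⟪x, u⟫| ≤ α} := by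
  rintro _ ⟨r, ⟨hr0, hr1⟩, _, ⟨θ, hθ, rfl⟩, rfl⟩
  have hθ1 : ‖(θ : E)‖ = 1 := norm_eq_of_mem_sphere θ
  refine ⟨?_, ?_⟩
  · simpa [norm_smul, hθ1, abs_of_pos hr0] using hr1
  · rw [real_inner_smul_left, abs_mul, abs_of_pos hr0]
    exact (mul_le_of_le_one_left (abs_nonneg _) hr1.le).trans hθ

variable [FiniteDimensional ℝ E] [MeasurableSpace E] [BorelSpace E]

theorem volume_ball_inter_abs_inner_le_le {u : E} (hu : ‖u‖ = 1) (α : ℝ) :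
    volume {x ∈ ball (0 : E) 1 | |⟪x, u⟫| ≤ α} ≤
      ENNReal.ofReal (2 * α) * volume (ball (0 : (ℝ ∙ u)ᗮ) 1) := by
  set K := ℝ ∙ u
  let e : E ≃ₗᵢ[ℝ] WithLp 2 (ℝ × Kᗮ) := K.orthogonalDecomposition.trans
    (LinearIsometryEquiv.withLpProdCongr 2 (LinearIsometryEquiv.toSpanUnitSingleton u hu).symm
      (LinearIsometryEquiv.refl ℝ Kᗮ))
  have he : MeasurePreserving (fun x => WithLp.ofLp (e x)) :=
    (WithLp.volume_preserving_ofLp ℝ Kᗮ).comp e.measurePreserving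
  have he_fst (x : E) : ‖(e x).fst‖ = |⟪x, u⟫| := by
    simp only [e, LinearIsometryEquiv.trans_apply, Submodule.orthogonalDecomposition_apply,
      LinearIsometryEquiv.withLpProdCongr_apply, WithLp.toLp_fst, LinearIsometryEquiv.norm_map,
      Submodule.coe_norm, Submodule.coe_orthogonalProjectionOnto_apply]
    rw [Submodule.starProjection_unit_singleton ℝ hu, norm_smul, hu, mul_one, real_inner_comm,
      norm_eq_abs]
  have he_snd (x : E) : ‖(e x).snd‖ ≤ ‖x‖ := by
    simp only [e, LinearIsometryEquiv.trans_apply, Submodule.orthogonalDecomposition_apply,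
      LinearIsometryEquiv.withLpProdCongr_apply, WithLp.toLp_snd, LinearIsometryEquiv.coe_refl,
      id_eq, Submodule.coe_norm, Submodule.coe_orthogonalProjectionOnto_apply]
    exact Kᗮ.norm_starProjection_apply_le x
  calc volume {x ∈ ball (0 : E) 1 | |⟪x, u⟫| ≤ α}
      ≤ volume ((fun x => WithLp.ofLp (e x)) ⁻¹' closedBall 0 α ×ˢ ball 0 1) := by
        refine measure_mono fun x ⟨hx1, hxα⟩ => ⟨?_, ?_⟩
        · simpa [he_fst] using hxα
        · simpa using (he_snd x).trans_lt (mem_ball_zero_iff.1 hx1)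
    _ = ENNReal.ofReal (2 * α) * volume (ball (0 : Kᗮ) 1) := by
        rw [he.measure_preimage (measurableSet_closedBall.prod measurableSet_ball).nullMeasurableSet,
          Measure.volume_eq_prod, Measure.prod_prod, Real.volume_closedBall]

theorem volume_ball_orthogonal_span_singleton_le (hE : 2 ≤ finrank ℝ E) {u : E} (hu : ‖u‖ = 1)
    {α : ℝ} (hα : 0 ≤ α) :
    ENNReal.ofReal (2 * α) * volume (ball (0 : (ℝ ∙ u)ᗮ) 1) ≤
      ENNReal.ofReal (α * √(finrank ℝ E * exp 1)) * volume (ball (0 : E) 1) := by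
  obtain ⟨n, hn⟩ : ∃ n, finrank ℝ E = n + 1 := ⟨_, (Nat.sub_add_cancel (by omega)).symm⟩
  have : Fact (finrank ℝ E = n + 1) := ⟨hn⟩
  have hK : finrank ℝ (ℝ ∙ u)ᗮ = n :=
    Submodule.finrank_orthogonal_span_singleton (by simp [← norm_ne_zero_iff, hu])
  have : Nontrivial E := Module.nontrivial_of_finrank_pos (R := ℝ) (by omega)
  have : Nontrivial (ℝ ∙ u)ᗮ := Module.nontrivial_of_finrank_pos (R := ℝ) (by omega)
  rw [InnerProductSpace.volume_ball, InnerProductSpace.volume_ball, hK, hn]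
  simp only [ENNReal.ofReal_one, one_pow, one_mul]
  rw [← ENNReal.ofReal_mul (by positivity), ← ENNReal.ofReal_mul (by positivity)]
  apply ENNReal.ofReal_le_ofReal
  push_cast
  rw [mul_comm 2 α, mul_assoc, mul_assoc]
  exact mul_le_mul_of_nonneg_left (two_mul_sqrt_pi_pow_div_Gamma_le n) hα

theorem toSphere_abs_inner_le_le (hE : 2 ≤ finrank ℝ E) {u : E} (hu : ‖u‖ = 1) {α : ℝ}
    (hα : 0 ≤ α) :
    (volume : Measure E).toSphere {θ : sphere (0 : E) 1 | |⟪(θ : E), u⟫| ≤ α} ≤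
      ENNReal.ofReal (α * √(finrank ℝ E * exp 1)) * (volume : Measure E).toSphere univ := by
  have hS : MeasurableSet {θ : sphere (0 : E) 1 | |⟪(θ : E), u⟫| ≤ α} :=
    measurableSet_le (by fun_prop) measurable_const
  rw [Measure.toSphere_apply' _ hS, Measure.toSphere_apply_univ, mul_left_comm]
  gcongr
  calc volume (Ioo (0 : ℝ) 1 • ((↑) '' {θ : sphere (0 : E) 1 | |⟪(θ : E), u⟫| ≤ α}))
      ≤ volume {x ∈ ball (0 : E) 1 | |⟪x, u⟫| ≤ α} :=
        measure_mono (Ioo_smul_image_abs_inner_le_subset u α)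
    _ ≤ ENNReal.ofReal (2 * α) * volume (ball (0 : (ℝ ∙ u)ᗮ) 1) :=
        volume_ball_inter_abs_inner_le_le hu α
    _ ≤ _ := volume_ball_orthogonal_span_singleton_le hE hu hα

/-- Mass distribution of the sphere: for `θ` uniform on the unit sphere in `ℝ^d`
(`d ≥ 3`) and a fixed unit vector `e₁`, `Pr[|θᵀe₁| ≤ α] ≤ α·√(d·e)`. -/
theorem stmt_2 (d : ℕ) (hd : 3 ≤ d) (e1 : EuclideanSpace ℝ (Fin d)) (he1 : ‖e1‖ = 1)
    (α : ℝ) (hα : 0 < α) :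
    (volume : Measure (EuclideanSpace ℝ (Fin d))).toSphere
        {θ : Metric.sphere (0 : EuclideanSpace ℝ (Fin d)) 1 |
          |(inner ℝ (θ : EuclideanSpace ℝ (Fin d)) e1 : ℝ)| ≤ α} ≤
      ENNReal.ofReal (α * Real.sqrt (d * Real.exp 1)) *
        (volume : Measure (EuclideanSpace ℝ (Fin d))).toSphere Set.univ := by
  have hd' : 2 ≤ finrank ℝ (EuclideanSpace ℝ (Fin d)) := by
    rw [finrank_euclideanSpace_fin]; omega
  simpa only [finrank_euclideanSpace_fin] using toSphere_abs_inner_le_le hd' he1 hα.le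
end

section
/- Let s be a real Gaussian random variable with variance σ² and density f. Suppose t ∈ R, p ∈ (0, 1/e], ε ∈ (0, σ√(ln(1/p))] satisfy Pr[s ≥ t-ε] ≥ p and Pr[s ≤ t] ≥ p. Then for any x_1, x_2 ∈ [t - 4σ√(ln(1/p)), t + 4σ√(ln(1/p))], we have f(x_1)/f(x_2) ≤ exp(8σ^{-1}√(ln(1/p)) · |x_1 - x_2|). -/
/-!
A Gaussian is sub-Gaussian about its mean, so by the Chernoff bound the two tail conditions
force `t - ε` and `t` to lie within `2σ√(ln p⁻¹)` of the mean `m`; hence every point of the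
interval lies within `8σ√(ln p⁻¹)` of `m`, and there the derivative `(m - x)/σ²` of the
log-density is bounded by `8σ⁻¹√(ln p⁻¹)`.
-/

open MeasureTheory ProbabilityTheory Real
open scoped NNReal

lemma ProbabilityTheory.HasSubgaussianMGF.le_sqrt_of_le_measureReal {Ω : Type*}
    {mΩ : MeasurableSpace Ω} {μ : Measure Ω} {X : Ω → ℝ} {c : ℝ≥0} {ε p : ℝ}
    (h : HasSubgaussianMGF X c μ) (hc : c ≠ 0) (hp : 0 < p)
    (hε : p ≤ μ.real {ω | ε ≤ X ω}) : ε ≤ √(2 * c * log p⁻¹) := by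
  by_contra! hlt
  have hε0 : 0 < ε := (sqrt_nonneg _).trans_lt hlt
  have hsq : 2 * c * log p⁻¹ < ε ^ 2 := (sqrt_lt' hε0).mp hlt
  have htail : exp (-ε ^ 2 / (2 * c)) < p := by
    have hc' : (0 : ℝ) < c := NNReal.coe_pos.mpr (pos_iff_ne_zero.mpr hc)
    rw [← exp_log hp, exp_lt_exp, div_lt_iff₀ (by positivity)]
    rw [log_inv] at hsq
    linarith
  exact (hε.trans (h.measure_ge_le hε0.le)).not_gt htail

lemma ProbabilityTheory.hasSubgaussianMGF_sub_gaussianReal (m : ℝ) (v : ℝ≥0) :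
    HasSubgaussianMGF (fun x ↦ x - m) v (gaussianReal m v) := by
  rw [← HasSubgaussianMGF.id_map_iff (by fun_prop), gaussianReal_map_sub_const, sub_self]
  exact ⟨integrable_exp_mul_gaussianReal, fun t ↦ by simp [mgf_id_gaussianReal]⟩

lemma ProbabilityTheory.sub_le_of_le_gaussianReal_Ici {m a p : ℝ} {v : ℝ≥0} (hv : v ≠ 0)
    (hp : 0 < p) (h : ENNReal.ofReal p ≤ gaussianReal m v {x | a ≤ x}) :
    a - m ≤ √(2 * v * log p⁻¹) := by
  refine (hasSubgaussianMGF_sub_gaussianReal m v).le_sqrt_of_le_measureReal hv hp ?_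
  simpa [ENNReal.ofReal_le_iff_le_toReal, measureReal_def] using h

lemma ProbabilityTheory.sub_le_of_le_gaussianReal_Iic {m a p : ℝ} {v : ℝ≥0} (hv : v ≠ 0)
    (hp : 0 < p) (h : ENNReal.ofReal p ≤ gaussianReal m v {x | x ≤ a}) :
    m - a ≤ √(2 * v * log p⁻¹) := by
  refine (hasSubgaussianMGF_sub_gaussianReal m v).neg.le_sqrt_of_le_measureReal hv hp ?_
  have hset : {x : ℝ | m - a ≤ (-fun x ↦ x - m) x} = {x | x ≤ a} := by
    ext x
    simp only [Set.mem_ofPred_eq, Pi.neg_apply, neg_sub, sub_le_sub_iff_left]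
  rwa [hset, measureReal_def, ← ENNReal.ofReal_le_iff_le_toReal (measure_ne_top _ _)]

lemma exp_neg_sq_div_div_exp_neg_sq_div_le {m s r x y : ℝ} (hx : |x - m| ≤ r)
    (hy : |y - m| ≤ r) :
    exp (-(x - m) ^ 2 / (2 * s ^ 2)) / exp (-(y - m) ^ 2 / (2 * s ^ 2)) ≤
      exp (r / s ^ 2 * |x - y|) := by
  rw [← exp_sub, exp_le_exp]
  have hprod : (y - m) ^ 2 - (x - m) ^ 2 ≤ 2 * r * |x - y| := by
    calc (y - m) ^ 2 - (x - m) ^ 2 = (y - x) * ((x - m) + (y - m)) := by ring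
      _ ≤ |y - x| * |(x - m) + (y - m)| := (le_abs_self _).trans_eq (abs_mul _ _)
      _ ≤ |x - y| * (2 * r) := by
        rw [abs_sub_comm]
        gcongr
        exact (abs_add_le _ _).trans (by linarith)
      _ = 2 * r * |x - y| := mul_comm _ _
  calc -(x - m) ^ 2 / (2 * s ^ 2) - -(y - m) ^ 2 / (2 * s ^ 2)
      = ((y - m) ^ 2 - (x - m) ^ 2) / (2 * s ^ 2) := by ring
    _ ≤ 2 * r * |x - y| / (2 * s ^ 2) := by gcongr
    _ = r / s ^ 2 * |x - y| := by ring

/-- Gaussian as log-Lipschitz: under the stated conditions on `t, p, ε`, the Gaussian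
density `f` with mean `m` and standard deviation `σ` satisfies
`f(x₁)/f(x₂) ≤ exp(8σ⁻¹√(ln p⁻¹)·|x₁-x₂|)` on the interval
`[t - 4σ√(ln p⁻¹), t + 4σ√(ln p⁻¹)]`. -/
theorem stmt_5 (m : ℝ) (σ : NNReal) (hσ : 0 < σ) (t p ε : ℝ)
    (hp : p ∈ Set.Ioc (0 : ℝ) (Real.exp 1)⁻¹)
    (hε : ε ∈ Set.Ioc (0 : ℝ) ((σ : ℝ) * Real.sqrt (Real.log p⁻¹)))
    (h1 : ENNReal.ofReal p ≤ gaussianReal m (σ ^ 2) {x | t - ε ≤ x})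
    (h2 : ENNReal.ofReal p ≤ gaussianReal m (σ ^ 2) {x | x ≤ t})
    (x1 x2 : ℝ)
    (hx1 : x1 ∈ Set.Icc (t - 4 * σ * Real.sqrt (Real.log p⁻¹))
        (t + 4 * σ * Real.sqrt (Real.log p⁻¹)))
    (hx2 : x2 ∈ Set.Icc (t - 4 * σ * Real.sqrt (Real.log p⁻¹))
        (t + 4 * σ * Real.sqrt (Real.log p⁻¹))) :
    (((σ : ℝ) * Real.sqrt (2 * Real.pi))⁻¹ * Real.exp (-(x1 - m) ^ 2 / (2 * σ ^ 2))) /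
        (((σ : ℝ) * Real.sqrt (2 * Real.pi))⁻¹ * Real.exp (-(x2 - m) ^ 2 / (2 * σ ^ 2))) ≤
      Real.exp (8 * (σ : ℝ)⁻¹ * Real.sqrt (Real.log p⁻¹) * |x1 - x2|) := by
  set L := log p⁻¹
  have hv : σ ^ 2 ≠ 0 := pow_ne_zero 2 hσ.ne'
  have hL : 0 ≤ L := log_nonneg <| (one_le_inv₀ hp.1).mpr <|
    hp.2.trans (inv_le_one_of_one_le₀ (one_le_exp zero_le_one))
  have hdev : √(2 * ↑(σ ^ 2) * L) ≤ 2 * σ * √L := by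
    rw [← sqrt_sq (by positivity : (0 : ℝ) ≤ 2 * σ * √L)]
    refine sqrt_le_sqrt ?_
    rw [mul_pow, mul_pow, sq_sqrt hL, NNReal.coe_pow]
    nlinarith [sq_nonneg (σ : ℝ)]
  have hright : t - ε - m ≤ 2 * σ * √L :=
    (sub_le_of_le_gaussianReal_Ici hv hp.1 h1).trans hdev
  have hleft : m - t ≤ 2 * σ * √L :=
    (sub_le_of_le_gaussianReal_Iic hv hp.1 h2).trans hdev
  have hR : 0 ≤ (σ : ℝ) * √L := by positivity
  have hnear :
      ∀ x ∈ Set.Icc (t - 4 * σ * √L) (t + 4 * σ * √L), |x - m| ≤ 8 * σ * √L :=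
    fun x hx ↦ abs_le.mpr ⟨by linarith [hx.1], by linarith [hx.2, hε.2]⟩
  rw [mul_div_mul_left _ _ (by positivity)]
  refine (exp_neg_sq_div_div_exp_neg_sq_div_le (hnear x1 hx1) (hnear x2 hx2)).trans_eq ?_
  congr 1
  field_simp
end

section
/- Let s be a real Gaussian random variable with variance σ². For t ∈ R and p ∈ (0, 1/e], set L = 8σ^{-1}√(ln(1/p)) and let 0 ≤ ε ≤ 1/L. If Pr[s ≥ t - ε] ≥ p and Pr[s ≤ t] ≥ p, then Pr[s ≥ t - ε | s ≤ t] ≤ e³·ε·L·Pr[s ≥ t]. -/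
/-!
Write `φ` for the density at `t` and `d = |t - m|`. The Chernoff bound turns
`Pr[s ≥ t - ε] ≥ p` and `Pr[s ≤ t] ≥ p` into `d ≤ σ √(2 ln(1/p)) + ε`, and with `ε ≤ 1/L` this
gives `ε d ≤ (3/2) σ²` and `d + σ ≤ 4 σ √(ln(1/p))`. The first inequality keeps the density on
`[t - ε, t]` below `e^{3/2} φ`, so `Pr[t - ε ≤ s ≤ t] ≤ e^{3/2} ε φ`. Of the two tails at `t`, the
one containing `m` has mass at least `1/2`, and the other has mass at least
`e^{-3/2} σ² φ / (d + σ)` (a Mills-ratio bound), so `Pr[s ≤ t] Pr[s ≥ t]` is at least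
`e^{-3/2} σ² φ / (2 (d + σ))`.
-/

open MeasureTheory ProbabilityTheory Real
open scoped NNReal

namespace ProbabilityTheory

lemma gaussianPDFReal_le_exp_mul (m : ℝ) (v : ℝ≥0) {x y c : ℝ}
    (h : ((x - m) ^ 2 - (y - m) ^ 2) / (2 * v) ≤ c) :
    gaussianPDFReal m v y ≤ exp c * gaussianPDFReal m v x := by
  rw [gaussianPDFReal, gaussianPDFReal, mul_left_comm, ← exp_add]
  gcongr
  rw [sub_div] at h
  simp only [neg_div]
  linarith

lemma gaussianPDFReal_neg (m : ℝ) (v : ℝ≥0) (x : ℝ) :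
    gaussianPDFReal (-m) v (-x) = gaussianPDFReal m v x := by
  simp only [gaussianPDFReal, neg_sub_neg, ← neg_sub x m, neg_sq]

lemma gaussianReal_real_eq_setIntegral (m : ℝ) {v : ℝ≥0} (hv : v ≠ 0) (s : Set ℝ) :
    (gaussianReal m v).real s = ∫ x in s, gaussianPDFReal m v x := by
  rw [measureReal_def, gaussianReal_apply_eq_integral _ hv, ENNReal.toReal_ofReal]
  exact integral_nonneg fun x => gaussianPDFReal_nonneg _ _ _

lemma gaussianReal_real_Icc_le {m : ℝ} {v : ℝ≥0} (hv : v ≠ 0) {a b M : ℝ} (hab : a ≤ b)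
    (hM : ∀ x ∈ Set.Icc a b, gaussianPDFReal m v x ≤ M) :
    (gaussianReal m v).real (Set.Icc a b) ≤ (b - a) * M := by
  rw [gaussianReal_real_eq_setIntegral m hv]
  calc ∫ x in Set.Icc a b, gaussianPDFReal m v x ≤ ∫ _ in Set.Icc a b, M :=
        setIntegral_mono_on (integrable_gaussianPDFReal m v).integrableOn
          (integrableOn_const (by simp)) measurableSet_Icc hM
    _ = (b - a) * M := by simp [hab]

lemma le_gaussianReal_real_Icc {m : ℝ} {v : ℝ≥0} (hv : v ≠ 0) {a b M : ℝ} (hab : a ≤ b)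
    (hM : ∀ x ∈ Set.Icc a b, M ≤ gaussianPDFReal m v x) :
    (b - a) * M ≤ (gaussianReal m v).real (Set.Icc a b) := by
  rw [gaussianReal_real_eq_setIntegral m hv]
  calc (b - a) * M = ∫ _ in Set.Icc a b, M := by simp [hab]
    _ ≤ ∫ x in Set.Icc a b, gaussianPDFReal m v x :=
        setIntegral_mono_on (integrableOn_const (by simp))
          (integrable_gaussianPDFReal m v).integrableOn measurableSet_Icc hM

lemma gaussianReal_real_Icc_le_mul_exp_mul_pdf {m : ℝ} {v : ℝ≥0} (hv : v ≠ 0) {a b : ℝ}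
    (hab : a ≤ b) :
    (gaussianReal m v).real (Set.Icc a b) ≤
      (b - a) * (exp ((b - a) * |b - m| / v) * gaussianPDFReal m v b) := by
  refine gaussianReal_real_Icc_le hv hab fun x ⟨hax, hxb⟩ => gaussianPDFReal_le_exp_mul m v ?_
  have hv' : (0 : ℝ) < v := by positivity
  have hsq : (b - m) ^ 2 - (x - m) ^ 2 ≤ 2 * ((b - a) * |b - m|) := by
    have hsum : b + x - 2 * m ≤ 2 * |b - m| := by linarith [le_abs_self (b - m)]
    nlinarith [mul_le_mul_of_nonneg_left hsum (sub_nonneg.2 hxb),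
      mul_le_mul_of_nonneg_right (sub_le_sub_left hax b) (abs_nonneg (b - m))]
  rw [div_le_div_iff₀ (by positivity) hv']
  nlinarith

lemma hasSubgaussianMGF_sub_gaussianReal_s6 (m : ℝ) (v : ℝ≥0) :
    HasSubgaussianMGF (fun x => x - m) v (gaussianReal m v) := by
  rw [← HasSubgaussianMGF.id_map_iff (by fun_prop), gaussianReal_map_sub_const, sub_self]
  exact ⟨fun t => integrable_exp_mul_gaussianReal t, fun t => by simp [mgf_id_gaussianReal]⟩

lemma gaussianReal_real_Ici_le_exp {m a : ℝ} (v : ℝ≥0) (ha : m ≤ a) :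
    (gaussianReal m v).real (Set.Ici a) ≤ exp (-(a - m) ^ 2 / (2 * v)) := by
  simpa only [sub_le_sub_iff_right, Set.Ici_def] using
    (hasSubgaussianMGF_sub_gaussianReal_s6 m v).measure_ge_le (sub_nonneg.2 ha)

lemma gaussianReal_real_Iic_eq_real_Ici_neg (m : ℝ) (v : ℝ≥0) (a : ℝ) :
    (gaussianReal m v).real (Set.Iic a) = (gaussianReal (-m) v).real (Set.Ici (-a)) := by
  rw [← gaussianReal_map_neg, map_measureReal_apply (by fun_prop) measurableSet_Ici]
  simp [Set.preimage, Set.Ici, Set.Iic]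

lemma gaussianReal_real_Iic_self_eq_Ici_self (m : ℝ) (v : ℝ≥0) :
    (gaussianReal m v).real (Set.Iic m) = (gaussianReal m v).real (Set.Ici m) := by
  have hsymm : (gaussianReal m v).map (fun x => 2 * m - x) = gaussianReal m v := by
    rw [gaussianReal_map_const_sub]
    ring_nf
  conv_rhs => rw [← hsymm, map_measureReal_apply (by fun_prop) measurableSet_Ici]
  congr 1
  ext x
  simp only [Set.mem_Iic, Set.mem_preimage, Set.mem_Ici]
  constructor <;> intro h <;> linarith

lemma one_half_le_gaussianReal_real_Ici {m a : ℝ} (v : ℝ≥0) (ha : a ≤ m) :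
    1 / 2 ≤ (gaussianReal m v).real (Set.Ici a) := by
  have hcover : 1 ≤ (gaussianReal m v).real (Set.Iic m) + (gaussianReal m v).real (Set.Ici m) :=
    calc 1 = (gaussianReal m v).real (Set.Iic m ∪ Set.Ici m) := by
          rw [Set.Iic_union_Ici, probReal_univ]
      _ ≤ _ := measureReal_union_le _ _
  have hmono : (gaussianReal m v).real (Set.Ici m) ≤ (gaussianReal m v).real (Set.Ici a) :=
    measureReal_mono (Set.Ici_subset_Ici.2 ha)
  rw [gaussianReal_real_Iic_self_eq_Ici_self] at hcover
  linarith

-- The tail contains `[a, a + h]` with `h = σ² / (a - m + σ)`, where the density stays above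
-- `e^{-3/2}` times its value at `a`.
lemma mul_pdf_le_exp_mul_gaussianReal_real_Ici {m a : ℝ} {σ : ℝ≥0} (hσ : 0 < σ) (ha : m ≤ a) :
    σ ^ 2 / (a - m + σ) * gaussianPDFReal m (σ ^ 2) a ≤
      exp (3 / 2) * (gaussianReal m (σ ^ 2)).real (Set.Ici a) := by
  have hσ' : (0 : ℝ) < σ := hσ
  set h : ℝ := σ ^ 2 / (a - m + σ) with hh
  have hden : 0 < a - m + σ := by linarith
  have h_pos : 0 < h := by positivity
  have h_mul : h * (a - m + σ) = σ ^ 2 := div_mul_cancel₀ _ hden.ne'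
  have h_le : h ≤ σ := by rw [hh, div_le_iff₀ hden]; nlinarith
  have hpdf : ∀ x ∈ Set.Icc a (a + h),
      exp (-(3 / 2)) * gaussianPDFReal m (σ ^ 2) a ≤ gaussianPDFReal m (σ ^ 2) x := by
    rintro x ⟨hax, hxh⟩
    rw [exp_neg, inv_mul_le_iff₀ (exp_pos _)]
    refine gaussianPDFReal_le_exp_mul m _ ?_
    rw [div_le_iff₀ (by positivity), NNReal.coe_pow]
    nlinarith [mul_le_mul h_le h_le h_pos.le hσ'.le]
  calc h * gaussianPDFReal m (σ ^ 2) a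
      = exp (3 / 2) * ((a + h - a) * (exp (-(3 / 2)) * gaussianPDFReal m (σ ^ 2) a)) := by
        rw [add_sub_cancel_left, exp_neg]
        field_simp
    _ ≤ exp (3 / 2) * (gaussianReal m (σ ^ 2)).real (Set.Icc a (a + h)) := by
        gcongr
        exact le_gaussianReal_real_Icc (pow_ne_zero 2 hσ.ne') (by linarith) hpdf
    _ ≤ exp (3 / 2) * (gaussianReal m (σ ^ 2)).real (Set.Ici a) := by
        gcongr
        exacts [measure_ne_top _ _, Set.Icc_subset_Ici_self]

lemma mul_pdf_le_gaussianReal_real_Iic_mul_Ici {m : ℝ} {σ : ℝ≥0} (hσ : 0 < σ) (t : ℝ) :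
    σ ^ 2 / (|t - m| + σ) * gaussianPDFReal m (σ ^ 2) t ≤
      2 * exp (3 / 2) *
        ((gaussianReal m (σ ^ 2)).real (Set.Iic t) * (gaussianReal m (σ ^ 2)).real (Set.Ici t)) := by
  set μ := gaussianReal m (σ ^ 2)
  rcases le_total m t with hmt | htm
  · have hD : 1 / 2 ≤ μ.real (Set.Iic t) := by
      rw [gaussianReal_real_Iic_eq_real_Ici_neg]
      exact one_half_le_gaussianReal_real_Ici _ (neg_le_neg hmt)
    rw [abs_of_nonneg (sub_nonneg.2 hmt)]
    calc _ ≤ exp (3 / 2) * μ.real (Set.Ici t) := mul_pdf_le_exp_mul_gaussianReal_real_Ici hσ hmt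
      _ ≤ exp (3 / 2) * μ.real (Set.Ici t) * (2 * μ.real (Set.Iic t)) :=
        le_mul_of_one_le_right (by positivity) (by linarith)
      _ = _ := by ring
  · have hU : 1 / 2 ≤ μ.real (Set.Ici t) := one_half_le_gaussianReal_real_Ici _ htm
    have hD := mul_pdf_le_exp_mul_gaussianReal_real_Ici hσ (neg_le_neg htm)
    rw [gaussianPDFReal_neg, ← gaussianReal_real_Iic_eq_real_Ici_neg, neg_sub_neg] at hD
    rw [abs_of_nonpos (sub_nonpos.2 htm), neg_sub]
    calc _ ≤ exp (3 / 2) * μ.real (Set.Iic t) := hD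
      _ ≤ exp (3 / 2) * μ.real (Set.Iic t) * (2 * μ.real (Set.Ici t)) :=
        le_mul_of_one_le_right (by positivity) (by linarith)
      _ = _ := by ring

lemma sub_le_of_le_gaussianReal_real_Ici {m a p : ℝ} {σ : ℝ≥0} (hσ : 0 < σ) (hp : 0 < p)
    (h : p ≤ (gaussianReal m (σ ^ 2)).real (Set.Ici a)) :
    a - m ≤ σ * √(2 * log p⁻¹) := by
  rcases le_total a m with ham | hma
  · have : 0 ≤ (σ : ℝ) * √(2 * log p⁻¹) := by positivity
    linarith
  have hσ' : (0 : ℝ) < σ := hσ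
  have hlog := log_le_log hp (h.trans (gaussianReal_real_Ici_le_exp _ hma))
  rw [log_exp, NNReal.coe_pow, le_div_iff₀ (by positivity)] at hlog
  rw [← sqrt_sq hσ'.le, ← sqrt_mul (sq_nonneg _), log_inv]
  exact (le_abs_self _).trans (abs_le_sqrt (by nlinarith))

lemma sub_le_of_le_gaussianReal_real_Iic {m a p : ℝ} {σ : ℝ≥0} (hσ : 0 < σ) (hp : 0 < p)
    (h : p ≤ (gaussianReal m (σ ^ 2)).real (Set.Iic a)) :
    m - a ≤ σ * √(2 * log p⁻¹) := by
  rw [gaussianReal_real_Iic_eq_real_Ici_neg] at h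
  linarith [sub_le_of_le_gaussianReal_real_Ici hσ hp h]

lemma gaussianReal_real_Icc_le_mul_real_Iic_mul_real_Ici {m t ε : ℝ} {σ : ℝ≥0} (hσ : 0 < σ)
    (hε : 0 ≤ ε) (hεt : ε * |t - m| ≤ 3 / 2 * σ ^ 2) :
    (gaussianReal m (σ ^ 2)).real (Set.Icc (t - ε) t) ≤
      exp 3 * ε * (2 * (|t - m| + σ) / σ ^ 2) *
        ((gaussianReal m (σ ^ 2)).real (Set.Iic t) * (gaussianReal m (σ ^ 2)).real (Set.Ici t)) := by
  have hσ' : (0 : ℝ) < σ := hσ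
  have hpdf := gaussianReal_real_Icc_le_mul_exp_mul_pdf (m := m) (pow_ne_zero 2 hσ.ne')
    (sub_le_self t hε)
  rw [sub_sub_cancel] at hpdf
  set φ := gaussianPDFReal m (σ ^ 2) t
  calc _ ≤ ε * (exp (ε * |t - m| / ↑(σ ^ 2)) * φ) := hpdf
    _ ≤ ε * (exp (3 / 2) * φ) := by
      refine mul_le_mul_of_nonneg_left
        (mul_le_mul_of_nonneg_right (exp_le_exp.2 ?_) (gaussianPDFReal_nonneg _ _ _)) hε
      rwa [NNReal.coe_pow, div_le_iff₀ (by positivity)]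
    _ = exp (3 / 2) * ε * (|t - m| + σ) / σ ^ 2 * (σ ^ 2 / (|t - m| + σ) * φ) := by
      field_simp
    _ ≤ exp (3 / 2) * ε * (|t - m| + σ) / σ ^ 2 * (2 * exp (3 / 2) *
          ((gaussianReal m (σ ^ 2)).real (Set.Iic t) * (gaussianReal m (σ ^ 2)).real (Set.Ici t))) :=
      mul_le_mul_of_nonneg_left (mul_pdf_le_gaussianReal_real_Iic_mul_Ici hσ t) (by positivity)
    _ = _ := by
      rw [show exp 3 = exp (3 / 2) * exp (3 / 2) by rw [← exp_add]; norm_num]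
      ring

lemma abs_sub_le_of_le_gaussianReal_real {m t p ε : ℝ} {σ : ℝ≥0} (hσ : 0 < σ) (hp : 0 < p)
    (hε : 0 ≤ ε)
    (hright : p ≤ (gaussianReal m (σ ^ 2)).real (Set.Ici (t - ε)))
    (hleft : p ≤ (gaussianReal m (σ ^ 2)).real (Set.Iic t)) :
    |t - m| ≤ σ * √(2 * log p⁻¹) + ε := by
  rw [abs_le]
  constructor
  · linarith [sub_le_of_le_gaussianReal_real_Iic hσ hp hleft]
  · linarith [sub_le_of_le_gaussianReal_real_Ici hσ hp hright]

end ProbabilityTheory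

/-- Condition-reversing interval lemma for a Gaussian variable `s` with standard
deviation `σ`: with `L = 8σ⁻¹√(ln p⁻¹)` and `0 ≤ ε ≤ 1/L`, if `Pr[s ≥ t-ε] ≥ p` and
`Pr[s ≤ t] ≥ p` then `Pr[s ≥ t-ε | s ≤ t] ≤ e³·ε·L·Pr[s ≥ t]`. -/
theorem stmt_6 (m : ℝ) (σ : NNReal) (hσ : 0 < σ) (t p ε : ℝ)
    (hp : p ∈ Set.Ioc (0 : ℝ) (Real.exp 1)⁻¹)
    (hε0 : 0 ≤ ε) (hε1 : ε ≤ (8 * (σ : ℝ)⁻¹ * Real.sqrt (Real.log p⁻¹))⁻¹)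
    (h1 : ENNReal.ofReal p ≤ gaussianReal m (σ ^ 2) {x | t - ε ≤ x})
    (h2 : ENNReal.ofReal p ≤ gaussianReal m (σ ^ 2) {x | x ≤ t}) :
    (gaussianReal m (σ ^ 2) {x | t - ε ≤ x ∧ x ≤ t}).toReal /
        (gaussianReal m (σ ^ 2) {x | x ≤ t}).toReal ≤
      Real.exp 1 ^ 3 * ε * (8 * (σ : ℝ)⁻¹ * Real.sqrt (Real.log p⁻¹)) *
        (gaussianReal m (σ ^ 2) {x | t ≤ x}).toReal := by
  set μ := gaussianReal m (σ ^ 2)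
  set s := √(log p⁻¹)
  obtain ⟨hp0, hpe⟩ := hp
  have hσ' : (0 : ℝ) < σ := hσ
  have hs : 1 ≤ s := one_le_sqrt.2 <| by
    simpa using log_le_log (exp_pos 1) ((le_inv_comm₀ hp0 (exp_pos 1)).1 hpe)
  have hεs : ε * (8 * s) ≤ σ := by
    rwa [show (8 * (σ : ℝ)⁻¹ * s)⁻¹ = σ / (8 * s) by field_simp, le_div_iff₀ (by positivity)] at hε1
  rw [ENNReal.ofReal_le_iff_le_toReal (measure_ne_top _ _), ← measureReal_def] at h1 h2
  simp only [Set.Ici_def, Set.Iic_def, Set.Icc_def, ← measureReal_def] at h1 h2 ⊢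
  have hdist : |t - m| ≤ σ * (3 / 2 * s) + ε := by
    refine (abs_sub_le_of_le_gaussianReal_real hσ hp0 hε0 h1 h2).trans ?_
    rw [sqrt_mul zero_le_two]
    gcongr
    exact sqrt_two_lt_three_halves.le
  have hε8 : 8 * ε ≤ σ := by nlinarith
  have hdσ : |t - m| + σ ≤ 4 * s * σ := by nlinarith
  have hL : 2 * (|t - m| + σ) / σ ^ 2 ≤ 8 * (σ : ℝ)⁻¹ * s := by
    rw [div_le_iff₀ (by positivity)]
    field_simp
    linarith
  rw [div_le_iff₀ (hp0.trans_le h2), exp_one_pow]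
  calc _ ≤ exp 3 * ε * (2 * (|t - m| + σ) / σ ^ 2) * (μ.real (Set.Iic t) * μ.real (Set.Ici t)) :=
        gaussianReal_real_Icc_le_mul_real_Iic_mul_real_Ici hσ hε0 (by nlinarith)
    _ ≤ exp 3 * ε * (8 * (σ : ℝ)⁻¹ * s) * (μ.real (Set.Iic t) * μ.real (Set.Ici t)) := by
        gcongr
    _ = _ := by push_cast; ring
end

section
/- Let G = (V, E) be a finite graph each of whose connected components is a path or a cycle, with k components in total, and let S ⊆ V. Let T^S ⊆ S denote the set of vertices of S having at least 2 neighbors in S. If, regarding V, S, k as random with common underlying probability space over a fixed finite universe U (with S ⊆ V ⊆ U) and Pr[I ∈ S | I ∈ V] ≥ p > 2/3 for all I ∈ U, then E[|V|] ≤ (2E[k] + E[|T^S|])/(3p - 2). -/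
/-!
Pointwise, `3|S| ≤ 2|V| + 2k + |T^S|`. Indeed a graph has at least `|V| - k` edges, so
`2|V| - 2k ≤ ∑_{v ∈ V} deg v`. Splitting this degree sum into the degrees inside `S`, the edges
leaving `S` (each counted at its endpoint in `V \ S`) and the degrees in `V \ S`, and using that
all degrees are at most 2, gives `∑_{v ∈ V} deg v ≤ |S| + |T^S| + 4(|V| - |S|)`.
Taking expectations, with `E|S| = ∑_I Pr[I ∈ S] ≥ p E|V|`, yields `(3p - 2) E|V| ≤ 2E[k] + E|T^S|`.
-/

open MeasureTheory Finset

lemma Finset.sum_le_card_add_card_filter_two_le {ι : Type*} (s : Finset ι) {f : ι → ℕ}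
    (hf : ∀ i ∈ s, f i ≤ 2) : ∑ i ∈ s, f i ≤ #s + #(s.filter fun i => 2 ≤ f i) := by
  rw [card_filter, card_eq_sum_ones, ← sum_add_distrib]
  exact sum_le_sum fun i hi => by have := hf i hi; split_ifs <;> omega

lemma Finset.natCast_card_eq_sum_indicator {Ω ι : Type*} [Fintype ι] (W : Ω → Finset ι)
    (ω : Ω) :
    ((W ω).card : ℝ) = ∑ i, {ω' | i ∈ W ω'}.indicator 1 ω := by
  classical
  simp [Set.indicator_apply]

namespace SimpleGraph

variable {α : Type*}

lemma Reachable.deleteEdges_singleton {G : SimpleGraph α} {x y : α} (h : G.Reachable x y)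
    (a b : α) :
    (G.deleteEdges {s(a, b)}).Reachable x y ∨ (G.deleteEdges {s(a, b)}).Reachable x a ∨
      (G.deleteEdges {s(a, b)}).Reachable x b := by
  obtain ⟨w⟩ := h
  induction w with
  | nil => exact .inl .rfl
  | @cons u v w huv _ ih =>
    by_cases he : s(u, v) = s(a, b)
    · rcases Sym2.eq_iff.mp he with ⟨rfl, -⟩ | ⟨rfl, -⟩
      · exact .inr (.inl .rfl)
      · exact .inr (.inr .rfl)
    · have huv' : (G.deleteEdges {s(a, b)}).Adj u v := by simp [huv, he]
      exact ih.imp huv'.reachable.trans (Or.imp huv'.reachable.trans huv'.reachable.trans)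

lemma Reachable.deleteEdges_singleton_of_not_reachable {G : SimpleGraph α} {x y : α}
    (h : G.Reachable x y) (a b : α) (hx : ¬(G.deleteEdges {s(a, b)}).Reachable x a)
    (hy : ¬(G.deleteEdges {s(a, b)}).Reachable y a) :
    (G.deleteEdges {s(a, b)}).Reachable x y := by
  rcases h.deleteEdges_singleton a b with hxy | hxa | hxb
  · exact hxy
  · exact absurd hxa hx
  rcases h.symm.deleteEdges_singleton a b with hyx | hya | hyb
  · exact hyx.symm
  · exact absurd hya hy
  · exact hxb.trans hyb.symm

lemma natCard_components_deleteEdges_singleton_le [Finite α] (G : SimpleGraph α) (a b : α)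
    (s : Finset α) :
    Nat.card {C : (G.deleteEdges {s(a, b)}).ConnectedComponent //
        ∃ v ∈ s, (G.deleteEdges {s(a, b)}).connectedComponentMk v = C} ≤
      Nat.card {C : G.ConnectedComponent // ∃ v ∈ s, G.connectedComponentMk v = C} + 1 := by
  classical
  set G' := G.deleteEdges {s(a, b)}
  let φ := ConnectedComponent.map (Hom.ofLE (G.deleteEdges_le {s(a, b)}))
  -- Deleting `s(a, b)` splits at most one component, into the parts of `a` and `b`: sending
  -- the part of `a` to `none` makes the comparison map injective.
  let ψ : {C : G'.ConnectedComponent // ∃ v ∈ s, G'.connectedComponentMk v = C} →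
      Option {C : G.ConnectedComponent // ∃ v ∈ s, G.connectedComponentMk v = C} :=
    fun C => if C.1 = G'.connectedComponentMk a then none else
      some ⟨φ C.1, by obtain ⟨C, v, hv, rfl⟩ := C; exact ⟨v, hv, rfl⟩⟩
  have hψ : Function.Injective ψ := by
    rintro ⟨_, x, _, rfl⟩ ⟨_, y, _, rfl⟩ hxy
    simp only [ψ] at hxy
    split_ifs at hxy with hx hy hy
    · exact Subtype.ext (hx.trans hy.symm)
    · have hreach : G.Reachable x y := ConnectedComponent.exact (congrArg Subtype.val
        (Option.some_injective _ hxy))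
      exact Subtype.ext (ConnectedComponent.sound
        (hreach.deleteEdges_singleton_of_not_reachable a b (mt ConnectedComponent.sound hx)
          (mt ConnectedComponent.sound hy)))
  simpa [Finite.card_option] using Nat.card_le_card_of_injective ψ hψ

lemma card_le_ncard_edgeSet_add_natCard_components [Finite α] (G : SimpleGraph α)
    (s : Finset α) :
    #s ≤ G.edgeSet.ncard +
      Nat.card {C : G.ConnectedComponent // ∃ v ∈ s, G.connectedComponentMk v = C} := by
  induction hn : G.edgeSet.ncard generalizing G with
  | zero =>
    obtain rfl : G = ⊥ := edgeSet_eq_empty.mp ((Set.ncard_eq_zero (Set.toFinite _)).mp hn)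
    let f : s → {C : (⊥ : SimpleGraph α).ConnectedComponent //
        ∃ v ∈ s, (⊥ : SimpleGraph α).connectedComponentMk v = C} :=
      fun v => ⟨_, v, v.2, rfl⟩
    have hf : Function.Injective f := fun v w hvw =>
      Subtype.ext (reachable_bot.mp (ConnectedComponent.exact (congrArg Subtype.val hvw)))
    simpa using Nat.card_le_card_of_injective f hf
  | succ n ih =>
    obtain ⟨e, he⟩ := Set.nonempty_of_ncard_ne_zero (hn.trans_ne n.succ_ne_zero)
    induction e with | _ a b =>
    have hn' : (G.deleteEdges {s(a, b)}).edgeSet.ncard = n := by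
      rw [edgeSet_deleteEdges, Set.ncard_sdiff_singleton_of_mem he, hn, Nat.add_sub_cancel]
    have := ih (G.deleteEdges {s(a, b)}) hn'
    have := G.natCard_components_deleteEdges_singleton_le a b s
    omega

section Degrees

variable [Fintype α] (G : SimpleGraph α) [DecidableRel G.Adj] {s t : Finset α}

lemma ncard_neighborSet_eq_degree (v : α) : (G.neighborSet v).ncard = G.degree v := by
  rw [← card_neighborFinset_eq_degree, ← Set.ncard_coe_finset, coe_neighborFinset]

lemma ncard_neighborSet_inter_coe [DecidableEq α] (v : α) :
    (G.neighborSet v ∩ ↑t).ncard = #(G.neighborFinset v ∩ t) := by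
  rw [← Set.ncard_coe_finset, coe_inter, coe_neighborFinset]

lemma sum_degree_eq_two_mul_ncard_edgeSet (hs : ∀ v w, G.Adj v w → v ∈ s) :
    ∑ v ∈ s, G.degree v = 2 * G.edgeSet.ncard := by
  rw [← coe_edgeFinset, Set.ncard_coe_finset, ← sum_degrees_eq_twice_card_edges]
  refine sum_subset (subset_univ s) fun v _ hv => ?_
  rw [← card_neighborFinset_eq_degree, card_eq_zero, eq_empty_iff_forall_notMem]
  exact fun w hw => hv (hs v w ((mem_neighborFinset G v w).mp hw))

lemma sum_card_neighborFinset_sdiff_le [DecidableEq α] (hs : ∀ v w, G.Adj v w → v ∈ s) :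
    ∑ v ∈ t, #(G.neighborFinset v \ t) ≤ ∑ w ∈ s \ t, G.degree w := by
  have hout : ∀ v, G.neighborFinset v \ t = bipartiteAbove G.Adj (s \ t) v := fun v => by
    ext w
    simp only [mem_sdiff, mem_neighborFinset, mem_bipartiteAbove]
    exact ⟨fun h => ⟨⟨hs w v h.1.symm, h.2⟩, h.1⟩, fun h => ⟨h.2, h.1.2⟩⟩
  simp_rw [hout, sum_card_bipartiteAbove_eq_sum_card_bipartiteBelow]
  refine sum_le_sum fun w _ => card_le_card fun v hv => ?_
  exact (mem_neighborFinset G w v).mpr ((mem_bipartiteBelow G.Adj).mp hv).2.symm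

end Degrees

theorem three_mul_card_le_of_ncard_neighborSet_le_two [Fintype α] (G : SimpleGraph α)
    {s t : Finset α} (hts : t ⊆ s) (hs : ∀ v w, G.Adj v w → v ∈ s)
    (hdeg : ∀ v, (G.neighborSet v).ncard ≤ 2) :
    3 * #t ≤ 2 * #s +
      2 * Nat.card {C : G.ConnectedComponent // ∃ v ∈ s, G.connectedComponentMk v = C} +
      {v | v ∈ t ∧ 2 ≤ (G.neighborSet v ∩ ↑t).ncard}.ncard := by
  classical
  simp only [ncard_neighborSet_eq_degree] at hdeg
  have hT : {v | v ∈ t ∧ 2 ≤ (G.neighborSet v ∩ ↑t).ncard} =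
      ↑(t.filter fun v => 2 ≤ #(G.neighborFinset v ∩ t)) := by
    ext v
    simp only [coe_filter, ncard_neighborSet_inter_coe]
  have hinner : ∑ v ∈ t, #(G.neighborFinset v ∩ t) ≤
      #t + #(t.filter fun v => 2 ≤ #(G.neighborFinset v ∩ t)) :=
    t.sum_le_card_add_card_filter_two_le fun v _ =>
      (card_le_card inter_subset_left).trans (hdeg v)
  have hsplit : ∑ v ∈ t, G.degree v =
      ∑ v ∈ t, #(G.neighborFinset v ∩ t) + ∑ v ∈ t, #(G.neighborFinset v \ t) := by
    rw [← sum_add_distrib]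
    exact sum_congr rfl fun v _ => (card_inter_add_card_sdiff _ _).symm
  have hout := G.sum_card_neighborFinset_sdiff_le (t := t) hs
  have hrest : ∑ v ∈ s \ t, G.degree v ≤ #(s \ t) * 2 := sum_le_card_nsmul _ _ _ fun v _ => hdeg v
  have hedges := G.card_le_ncard_edgeSet_add_natCard_components s
  have htotal : ∑ v ∈ s \ t, G.degree v + ∑ v ∈ t, G.degree v = 2 * G.edgeSet.ncard := by
    rw [sum_sdiff hts, G.sum_degree_eq_two_mul_ncard_edgeSet hs]
  rw [card_sdiff_of_subset hts] at hrest
  rw [hT, Set.ncard_coe_finset]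
  have := card_le_card hts
  omega

end SimpleGraph

section Expectation

variable {Ω ι : Type*} [MeasurableSpace Ω] {μ : Measure Ω} [Fintype ι] {W : Ω → Finset ι}

lemma integrable_card [IsFiniteMeasure μ] (hW : ∀ i, MeasurableSet {ω | i ∈ W ω}) :
    Integrable (fun ω => ((W ω).card : ℝ)) μ := by
  simp_rw [Finset.natCast_card_eq_sum_indicator W]
  exact integrable_finsetSum _ fun i _ => (integrable_const 1).indicator (hW i)

lemma integral_card_eq_sum_measureReal [IsFiniteMeasure μ]
    (hW : ∀ i, MeasurableSet {ω | i ∈ W ω}) :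
    ∫ ω, ((W ω).card : ℝ) ∂μ = ∑ i, μ.real {ω | i ∈ W ω} := by
  simp_rw [Finset.natCast_card_eq_sum_indicator W]
  rw [integral_finsetSum _ fun i _ => (integrable_const 1).indicator (hW i)]
  exact sum_congr rfl fun i _ => integral_indicator_one (hW i)

lemma integral_le_div_of_three_mul_le {Y X Z W : Ω → ℝ} {p : ℝ} (hp : 2 / 3 < p)
    (hY : Integrable Y μ) (hX : Integrable X μ) (hZ : Integrable Z μ) (hW : Integrable W μ)
    (hpt : ∀ ω, 3 * X ω ≤ 2 * Y ω + 2 * Z ω + W ω) (hmean : p * ∫ ω, Y ω ∂μ ≤ ∫ ω, X ω ∂μ) :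
    ∫ ω, Y ω ∂μ ≤ (2 * ∫ ω, Z ω ∂μ + ∫ ω, W ω ∂μ) / (3 * p - 2) := by
  have hint : ∫ ω, 3 * X ω ∂μ ≤ ∫ ω, (2 * Y ω + 2 * Z ω + W ω) ∂μ :=
    integral_mono (by fun_prop) (by fun_prop) hpt
  rw [integral_add (by fun_prop) hW, integral_add (by fun_prop) (by fun_prop)] at hint
  simp only [integral_const_mul] at hint
  rw [le_div_iff₀ (by linarith)]
  linarith

end Expectation

theorem stmt_9_general {Ω : Type*} [MeasurableSpace Ω] (μ : Measure Ω) [IsProbabilityMeasure μ]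
    {U : Type*} [Fintype U]
    (V S : Ω → Finset U) (G : Ω → SimpleGraph U) (p : ℝ) (hp : 2 / 3 < p)
    (hSV : ∀ ω, S ω ⊆ V ω)
    (hsupp : ∀ ω v w, (G ω).Adj v w → v ∈ V ω)
    (hdeg : ∀ ω v, ((G ω).neighborSet v).ncard ≤ 2)
    (hcond : ∀ I : U, p * (μ {ω | I ∈ V ω}).toReal ≤ (μ {ω | I ∈ S ω}).toReal)
    (hmV : ∀ I : U, MeasurableSet {ω | I ∈ V ω})
    (hmS : ∀ I : U, MeasurableSet {ω | I ∈ S ω})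
    (hintk : Integrable (fun ω =>
      (Nat.card {C : (G ω).ConnectedComponent //
        ∃ v ∈ V ω, (G ω).connectedComponentMk v = C} : ℝ)) μ)
    (hintT : Integrable (fun ω =>
      (Set.ncard {v | v ∈ S ω ∧ 2 ≤ ((G ω).neighborSet v ∩ ↑(S ω)).ncard} : ℝ)) μ) :
    (∫ ω, ((V ω).card : ℝ) ∂μ) ≤
      (2 * (∫ ω, (Nat.card {C : (G ω).ConnectedComponent //
            ∃ v ∈ V ω, (G ω).connectedComponentMk v = C} : ℝ) ∂μ) +
        (∫ ω, (Set.ncard {v | v ∈ S ω ∧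
            2 ≤ ((G ω).neighborSet v ∩ ↑(S ω)).ncard} : ℝ) ∂μ)) / (3 * p - 2) := by
  refine integral_le_div_of_three_mul_le hp (integrable_card hmV) (integrable_card hmS) hintk
    hintT (fun ω => ?_) ?_
  · exact_mod_cast (G ω).three_mul_card_le_of_ncard_neighborSet_le_two (hSV ω) (hsupp ω) (hdeg ω)
  · rw [integral_card_eq_sum_measureReal hmV, integral_card_eq_sum_measureReal hmS, mul_sum]
    exact sum_le_sum fun I _ => hcond I

/-- Triples lemma (random version): `S ⊆ V ⊆ U` are random subsets of a fixed finite
universe `U`, and on `V` there is a (random) graph all of whose connected components are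
paths or cycles (equivalently all degrees are at most 2), with `k` components. If
`Pr[I ∈ S | I ∈ V] ≥ p > 2/3` for every `I ∈ U`, then
`E[|V|] ≤ (2E[k] + E[|T^S|])/(3p-2)`, where `T^S` is the set of vertices of `S` with
at least two neighbors in `S`. -/
theorem stmt_9 {Ω : Type*} [MeasurableSpace Ω] (μ : Measure Ω) [IsProbabilityMeasure μ]
    {U : Type*} [Fintype U] [DecidableEq U]
    (V S : Ω → Finset U) (G : Ω → SimpleGraph U) (p : ℝ) (hp : 2 / 3 < p)
    (hSV : ∀ ω, S ω ⊆ V ω)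
    (hsupp : ∀ ω v w, (G ω).Adj v w → v ∈ V ω)
    (hdeg : ∀ ω v, ((G ω).neighborSet v).ncard ≤ 2)
    (hcond : ∀ I : U, p * (μ {ω | I ∈ V ω}).toReal ≤ (μ {ω | I ∈ S ω}).toReal)
    (hmV : ∀ I : U, MeasurableSet {ω | I ∈ V ω})
    (hmS : ∀ I : U, MeasurableSet {ω | I ∈ S ω})
    (hintV : Integrable (fun ω => ((V ω).card : ℝ)) μ)
    (hintk : Integrable (fun ω =>
      (Nat.card {C : (G ω).ConnectedComponent //
        ∃ v ∈ V ω, (G ω).connectedComponentMk v = C} : ℝ)) μ)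
    (hintT : Integrable (fun ω =>
      (Set.ncard {v | v ∈ S ω ∧ 2 ≤ ((G ω).neighborSet v ∩ ↑(S ω)).ncard} : ℝ)) μ) :
    (∫ ω, ((V ω).card : ℝ) ∂μ) ≤
      (2 * (∫ ω, (Nat.card {C : (G ω).ConnectedComponent //
            ∃ v ∈ V ω, (G ω).connectedComponentMk v = C} : ℝ) ∂μ) +
        (∫ ω, (Set.ncard {v | v ∈ S ω ∧
            2 ≤ ((G ω).neighborSet v ∩ ↑(S ω)).ncard} : ℝ) ∂μ)) / (3 * p - 2) :=
  stmt_9_general μ V S G p hp hSV hsupp hdeg hcond hmV hmS hintk hintT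
end

section
/- Deterministic counting inequality underlying the triples lemma: let G = (V,E) be a finite graph with k connected components, each a path or a cycle, and S ⊆ V. Let T^S be the set of vertices of S with at least 2 neighbors in S. Then 3|S| ≤ 2k + |T^S| + 2|V|. -/
open SimpleGraph

private lemma delete_edge_reach {V : Type*} {G : SimpleGraph V} {u v x y : V}
    (w : G.Walk x y) :
    (G.deleteEdges {s(u,v)}).Reachable x y ∨
      (((G.deleteEdges {s(u,v)}).Reachable x u ∨ (G.deleteEdges {s(u,v)}).Reachable x v) ∧
       ((G.deleteEdges {s(u,v)}).Reachable y u ∨ (G.deleteEdges {s(u,v)}).Reachable y v)) := by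
  induction w with
  | nil => exact Or.inl (Reachable.refl _)
  | @cons a b c hadj p ih =>
    by_cases he : s(a, b) = s(u, v)
    · rw [Sym2.eq_iff] at he
      have hx : (G.deleteEdges {s(u,v)}).Reachable a u ∨ (G.deleteEdges {s(u,v)}).Reachable a v := by
        rcases he with ⟨h1, _⟩ | ⟨h1, _⟩
        · exact Or.inl (h1 ▸ Reachable.refl _)
        · exact Or.inr (h1 ▸ Reachable.refl _)
      have hb : (G.deleteEdges {s(u,v)}).Reachable b u ∨ (G.deleteEdges {s(u,v)}).Reachable b v := by
        rcases he with ⟨_, h2⟩ | ⟨_, h2⟩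
        · exact Or.inr (h2 ▸ Reachable.refl _)
        · exact Or.inl (h2 ▸ Reachable.refl _)
      rcases ih with hr | ⟨_, hc⟩
      · exact Or.inr ⟨hx, hb.imp (fun h => hr.symm.trans h) (fun h => hr.symm.trans h)⟩
      · exact Or.inr ⟨hx, hc⟩
    · have hab : (G.deleteEdges {s(u,v)}).Adj a b := by
        rw [deleteEdges_adj]
        exact ⟨hadj, by simpa using he⟩
      rcases ih with hr | ⟨hb, hc⟩
      · exact Or.inl (hab.reachable.trans hr)
      · exact Or.inr ⟨hb.imp (fun h => hab.reachable.trans h) (fun h => hab.reachable.trans h),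
          hc⟩

private lemma card_cc_delete {V : Type*} [Finite V] (G : SimpleGraph V) (u v : V) :
    Nat.card (G.deleteEdges {s(u,v)}).ConnectedComponent ≤
      Nat.card G.ConnectedComponent + 1 := by
  classical
  set G' := G.deleteEdges {s(u,v)} with hG'
  have hle : G' ≤ G := G.deleteEdges_le _
  let φ : G' →g G := Hom.ofLE hle
  let f : G'.ConnectedComponent → Option G.ConnectedComponent := fun c =>
    if c = G'.connectedComponentMk u then none else some (c.map φ)
  haveI hfin : Finite G.ConnectedComponent :=
    Finite.of_surjective G.connectedComponentMk (fun c => c.exists_rep)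
  have hf : Function.Injective f := by
    intro c d hcd
    by_cases hc : c = G'.connectedComponentMk u
    · by_cases hd : d = G'.connectedComponentMk u
      · exact hc.trans hd.symm
      · simp [f, hc, hd] at hcd
    · by_cases hd : d = G'.connectedComponentMk u
      · simp [f, hc, hd] at hcd
      · simp only [f, if_neg hc, if_neg hd, Option.some.injEq] at hcd
        obtain ⟨x, hx⟩ := c.exists_rep
        obtain ⟨y, hy⟩ := d.exists_rep
        subst hx hy
        have hcd' : G.connectedComponentMk x = G.connectedComponentMk y := hcd
        have hreach : G.Reachable x y := (SimpleGraph.ConnectedComponent.eq).mp hcd'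

        obtain ⟨w⟩ := hreach
        rcases delete_edge_reach (u := u) (v := v) w with hr | ⟨hxuv, hyuv⟩
        · exact ConnectedComponent.sound hr
        · have hxv : G'.Reachable x v := by
            rcases hxuv with h | h
            · exact absurd (ConnectedComponent.sound h) hc
            · exact h
          have hyv : G'.Reachable y v := by
            rcases hyuv with h | h
            · exact absurd (ConnectedComponent.sound h) hd
            · exact h
          exact ConnectedComponent.sound (hxv.trans hyv.symm)
  haveI := Fintype.ofFinite G.ConnectedComponent
  calc Nat.card G'.ConnectedComponent ≤ Nat.card (Option G.ConnectedComponent) :=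
        Nat.card_le_card_of_injective f hf
    _ = Nat.card G.ConnectedComponent + 1 := Finite.card_option

private lemma card_le_edges_add_cc {V : Type*} [Fintype V] (G : SimpleGraph V) :
    Fintype.card V ≤ G.edgeSet.ncard + Nat.card G.ConnectedComponent := by
  classical
  suffices H : ∀ n (G : SimpleGraph V), G.edgeSet.ncard = n →
      Fintype.card V ≤ n + Nat.card G.ConnectedComponent from H _ G rfl
  intro n
  induction n using Nat.strong_induction_on with
  | _ n ih =>
    intro G hn
    by_cases hG : G = ⊥
    · subst hG
      have hinj : Function.Injective ((⊥ : SimpleGraph V).connectedComponentMk) := by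
        intro a b hab
        have := (SimpleGraph.ConnectedComponent.eq).mp hab
        simpa [SimpleGraph.reachable_bot] using this
      have hfin : Finite (⊥ : SimpleGraph V).ConnectedComponent :=
        Finite.of_surjective (⊥ : SimpleGraph V).connectedComponentMk (fun c => c.exists_rep)
      have h1 := Nat.card_le_card_of_injective _ hinj
      have h3 : Nat.card V = Fintype.card V := Nat.card_eq_fintype_card
      omega
    · obtain ⟨e, he⟩ := (SimpleGraph.edgeSet_nonempty).mpr hG
      induction e using Sym2.ind with
      | _ u v =>
        set G' := G.deleteEdges {s(u,v)} with hG'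
        have hE' : G'.edgeSet.ncard = n - 1 := by
          rw [hG', edgeSet_deleteEdges, Set.ncard_diff_singleton_of_mem he, hn]
        have hpos : 0 < n := by
          rw [← hn]
          exact (Set.ncard_pos (Set.toFinite _)).mpr ⟨s(u,v), he⟩
        have h1 := ih (n - 1) (by omega) G' hE'
        have h2 := card_cc_delete G u v
        rw [← hG'] at h2
        omega

/-- Deterministic counting inequality underlying the triples lemma: in a finite graph
whose connected components are all paths or cycles (equivalently, all degrees are at
most 2) with `k` connected components, for any vertex subset `S` we have
`3|S| ≤ 2k + |T^S| + 2|V|`, where `T^S` is the set of vertices of `S` with at least two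
neighbors in `S`. -/
theorem stmt_10 {V : Type*} [Fintype V] (G : SimpleGraph V)
    (hdeg : ∀ v, (G.neighborSet v).ncard ≤ 2) (S : Finset V) :
    3 * S.card ≤ 2 * Nat.card G.ConnectedComponent +
      Set.ncard {v | v ∈ S ∧ 2 ≤ (G.neighborSet v ∩ ↑S).ncard} +
      2 * Fintype.card V := by
  classical
  set k := Nat.card G.ConnectedComponent with hk
  set n := Fintype.card V with hn
  -- degrees
  have hdegF : ∀ v, G.degree v ≤ 2 := by
    intro v
    have h := hdeg v
    rwa [← Nat.card_coe_set_eq, Nat.card_eq_fintype_card,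
      SimpleGraph.card_neighborSet_eq_degree] at h
  -- the set T as a finset
  set P : V → Prop := fun v => 2 ≤ (G.neighborSet v ∩ ↑S).ncard with hP
  have hTset : {v | v ∈ S ∧ P v} = ↑(S.filter P) := by
    ext v; simp [hP]
  have hT : Set.ncard {v | v ∈ S ∧ P v} = (S.filter P).card := by
    rw [hTset, Set.ncard_coe_finset]
  set T := S.filter P with hTdef
  set B := S.filter (fun v => ¬ P v) with hBdef
  have hSB : T.card + B.card = S.card := Finset.card_filter_add_card_filter_not _
  -- inner-degree as finset card
  have hinner : ∀ v, (G.neighborSet v ∩ ↑S).ncard = ((G.neighborFinset v) ∩ S).card := by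
    intro v
    have hs : (G.neighborSet v ∩ ↑S) = ↑(G.neighborFinset v ∩ S) := by
      ext x
      simp [SimpleGraph.mem_neighborFinset]
    rw [hs, Set.ncard_coe_finset]
  -- pointwise inequality on B
  have hpoint : ∀ v ∈ B, 1 ≤ (2 - G.degree v) + ((G.neighborFinset v) \ S).card := by
    intro v hv
    rw [hBdef, Finset.mem_filter] at hv
    have h1 : ((G.neighborFinset v) ∩ S).card ≤ 1 := by
      have h5 : ¬ (2 ≤ (G.neighborSet v ∩ ↑S).ncard) := hv.2
      rw [hinner v] at h5
      omega
    have h2 : ((G.neighborFinset v) ∩ S).card + ((G.neighborFinset v) \ S).card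
        = (G.neighborFinset v).card := Finset.card_inter_add_card_sdiff _ _
    have h3 : (G.neighborFinset v).card = G.degree v := rfl
    have h4 := hdegF v
    omega
  -- sum over B
  have hBsum : B.card ≤ (∑ v ∈ B, (2 - G.degree v)) + ∑ v ∈ B, ((G.neighborFinset v) \ S).card := by
    calc B.card = ∑ _v ∈ B, 1 := by simp
    _ ≤ ∑ v ∈ B, ((2 - G.degree v) + ((G.neighborFinset v) \ S).card) :=
        Finset.sum_le_sum hpoint
    _ = _ := Finset.sum_add_distrib
  -- deficiency bound
  have hEdef : Fintype.card V ≤ G.edgeSet.ncard + k := card_le_edges_add_cc G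
  have hEcard : G.edgeSet.ncard = G.edgeFinset.card := by
    rw [SimpleGraph.edgeFinset_card, ← Nat.card_coe_set_eq, Nat.card_eq_fintype_card]
  have hhand : ∑ v, G.degree v = 2 * G.edgeFinset.card :=
    SimpleGraph.sum_degrees_eq_twice_card_edges G
  have hdefsum : (∑ v, (2 - G.degree v)) + ∑ v, G.degree v = 2 * n := by
    rw [← Finset.sum_add_distrib]
    have : ∀ v ∈ Finset.univ, (2 - G.degree v) + G.degree v = 2 := by
      intro v _
      have := hdegF v
      omega
    rw [Finset.sum_congr rfl this]
    simp [hn, Finset.card_univ, mul_comm]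
  have hdefle : (∑ v, (2 - G.degree v)) ≤ 2 * k := by
    have := hEdef
    rw [hEcard] at this
    omega
  have hBdefle : (∑ v ∈ B, (2 - G.degree v)) ≤ 2 * k := by
    refine le_trans ?_ hdefle
    exact Finset.sum_le_sum_of_subset (Finset.subset_univ B)
  -- double counting
  have houter : ∀ v, (G.neighborFinset v) \ S = (Finset.univ \ S).filter (G.Adj v) := by
    intro v
    ext x
    simp [SimpleGraph.mem_neighborFinset, and_comm]
  have hdouble : ∑ v ∈ S, ((G.neighborFinset v) \ S).card ≤ 2 * (Finset.univ \ S).card := by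
    calc ∑ v ∈ S, ((G.neighborFinset v) \ S).card
        = ∑ v ∈ S, ∑ x ∈ Finset.univ \ S, (if G.Adj v x then 1 else 0) := by
          refine Finset.sum_congr rfl fun v _ => ?_
          rw [houter v, Finset.card_filter]
      _ = ∑ x ∈ Finset.univ \ S, ∑ v ∈ S, (if G.Adj v x then 1 else 0) := Finset.sum_comm
      _ ≤ ∑ x ∈ Finset.univ \ S, 2 := by
          refine Finset.sum_le_sum fun x _ => ?_
          have hsub : S.filter (fun v => G.Adj v x) ⊆ G.neighborFinset x := by
            intro v hv
            rw [Finset.mem_filter] at hv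
            rw [SimpleGraph.mem_neighborFinset]
            exact hv.2.symm
          calc ∑ v ∈ S, (if G.Adj v x then 1 else 0)
              = (S.filter (fun v => G.Adj v x)).card := (Finset.card_filter _ _).symm
            _ ≤ (G.neighborFinset x).card := Finset.card_le_card hsub
            _ ≤ 2 := hdegF x
      _ = 2 * (Finset.univ \ S).card := by rw [Finset.sum_const, smul_eq_mul, mul_comm]
  have hBsub : ∑ v ∈ B, ((G.neighborFinset v) \ S).card
      ≤ ∑ v ∈ S, ((G.neighborFinset v) \ S).card :=
    Finset.sum_le_sum_of_subset (Finset.filter_subset _ _)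
  have hcompl : (Finset.univ \ S).card = n - S.card := by
    rw [Finset.card_sdiff_of_subset (Finset.subset_univ S), Finset.card_univ]
  have hSn : S.card ≤ n := by
    rw [hn, ← Finset.card_univ]
    exact Finset.card_le_card (Finset.subset_univ S)
  rw [hT]
  omega
end

section
/- Let T ⊆ R² be a closed convex set and R > r > 0. Let D(R, r) = R·B² \ r·B² be the closed annulus with inner radius r and outer radius R (B² the closed unit disk). Then the line integral of ||x||^{-1} over D(R, r) ∩ ∂T is at most 4π·⌈log₂(R/r)⌉. -/
/-!
Cut the annulus into the `⌈log₂ (R / r)⌉` dyadic shells `ρ ≤ ‖x‖ ≤ 2ρ`. On such a shell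
`‖x‖⁻¹ ≤ ρ⁻¹`, and the part of `∂T` in the disc of radius `2ρ` has length at most `4πρ`: it lies
on the boundary of the convex body `K = T ∩ B(0, 2ρ)`, which is covered by the image of the circle
of radius `2ρ` under the `1`-Lipschitz nearest-point map onto `K` (push a point outside `K` along
its normal ray until it meets the circle). Each shell therefore contributes at most `4π`.
-/

open MeasureTheory Metric Set Real
open scoped RealInnerProductSpace

section MetricProjection

variable {F : Type*} [NormedAddCommGroup F] [InnerProductSpace ℝ F]

structure IsMetricProjection (K : Set F) (p : F → F) : Prop where
  mem : ∀ x, p x ∈ K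
  inner_sub_nonpos : ∀ x, ∀ y ∈ K, ⟪x - p x, y - p x⟫ ≤ 0

namespace IsMetricProjection

variable {K : Set F} {p : F → F}

theorem eq_of_inner_sub_nonpos (hp : IsMetricProjection K p) {x v : F} (hv : v ∈ K)
    (h : ∀ y ∈ K, ⟪x - v, y - v⟫ ≤ 0) : p x = v := by
  have h₁ := hp.inner_sub_nonpos x v hv
  have h₂ := h (p x) (hp.mem x)
  have : ‖p x - v‖ ^ 2 = ⟪x - p x, v - p x⟫ + ⟪x - v, p x - v⟫ := by
    rw [← real_inner_self_eq_norm_sq]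
    simp only [inner_sub_left, inner_sub_right, real_inner_comm]
    ring
  exact sub_eq_zero.mp (norm_eq_zero.mp (by nlinarith [norm_nonneg (p x - v)]))

theorem apply_of_mem (hp : IsMetricProjection K p) {x : F} (hx : x ∈ K) : p x = x :=
  hp.eq_of_inner_sub_nonpos hx fun y _ ↦ by simp

theorem lipschitzWith (hp : IsMetricProjection K p) : LipschitzWith 1 p := by
  refine LipschitzWith.mk_one fun x y ↦ ?_
  have h₁ := hp.inner_sub_nonpos x (p y) (hp.mem y)
  have h₂ := hp.inner_sub_nonpos y (p x) (hp.mem x)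
  have key : ‖p x - p y‖ ^ 2 ≤ ‖x - y‖ * ‖p x - p y‖ := calc
    ‖p x - p y‖ ^ 2 = ⟪x - y, p x - p y⟫ + ⟪x - p x, p y - p x⟫ + ⟪y - p y, p x - p y⟫ := by
      rw [← real_inner_self_eq_norm_sq]
      simp only [inner_sub_left, inner_sub_right, real_inner_comm]
      ring
    _ ≤ ⟪x - y, p x - p y⟫ := by linarith
    _ ≤ ‖x - y‖ * ‖p x - p y‖ := real_inner_le_norm _ _
  rw [dist_eq_norm, dist_eq_norm]
  nlinarith [norm_nonneg (p x - p y), norm_nonneg (x - y)]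

theorem apply_add_smul_sub (hp : IsMetricProjection K p) (x : F) {t : ℝ} (ht : 0 ≤ t) :
    p (p x + t • (x - p x)) = p x :=
  hp.eq_of_inner_sub_nonpos (hp.mem x) fun y hy ↦ by
    rw [add_sub_cancel_left, real_inner_smul_left]
    exact mul_nonpos_of_nonneg_of_nonpos ht (hp.inner_sub_nonpos x y hy)

theorem image_compl_subset_image_sphere (hp : IsMetricProjection K p) {c : F} {ρ : ℝ}
    (hK : K ⊆ closedBall c ρ) : p '' Kᶜ ⊆ p '' sphere c ρ := by
  rintro _ ⟨x, hx, rfl⟩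
  have hne : 0 < ‖x - p x‖ := norm_pos_iff.mpr (sub_ne_zero.mpr fun h ↦ hx (h ▸ hp.mem x))
  set t₁ := 2 * ρ / ‖x - p x‖
  have hpx : dist (p x) c ≤ ρ := hK (hp.mem x)
  have hρ : 0 ≤ ρ := dist_nonneg.trans hpx
  have h₀ : dist (p x + (0 : ℝ) • (x - p x)) c ≤ ρ := by simpa using hpx
  have h₁ : ρ ≤ dist (p x + t₁ • (x - p x)) c := by
    have : ‖t₁ • (x - p x)‖ = 2 * ρ := by
      rw [norm_smul, Real.norm_of_nonneg (by positivity), div_mul_cancel₀ _ hne.ne']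
    have := dist_triangle_right (p x + t₁ • (x - p x)) (p x) c
    rw [dist_self_add_left] at this
    linarith
  have hcont : Continuous fun t : ℝ ↦ dist (p x + t • (x - p x)) c := by fun_prop
  obtain ⟨t, ht, hdist⟩ := intermediate_value_Icc (by positivity) hcont.continuousOn ⟨h₀, h₁⟩
  exact ⟨_, hdist, hp.apply_add_smul_sub x ht.1⟩

theorem frontier_subset_image_sphere [ProperSpace F] (hp : IsMetricProjection K p)
    (hKc : IsClosed K) {c : F} {ρ : ℝ} (hK : K ⊆ closedBall c ρ) :
    frontier K ⊆ p '' sphere c ρ := by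
  intro z hz
  have hp_cont := hp.lipschitzWith.continuous
  have hsub : p '' closure Kᶜ ⊆ p '' sphere c ρ := calc
    p '' closure Kᶜ ⊆ closure (p '' Kᶜ) := image_closure_subset_closure_image hp_cont
    _ ⊆ closure (p '' sphere c ρ) := closure_mono (hp.image_compl_subset_image_sphere hK)
    _ = p '' sphere c ρ := ((isCompact_sphere c ρ).image hp_cont).isClosed.closure_eq
  rw [← hp.apply_of_mem (hKc.frontier_subset hz)]
  exact hsub (mem_image_of_mem p (frontier_eq_closure_inter_closure.subset hz).2)

end IsMetricProjection

theorem exists_isMetricProjection [CompleteSpace F] {K : Set F} (hne : K.Nonempty)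
    (hKc : IsClosed K) (hKconv : Convex ℝ K) : ∃ p, IsMetricProjection K p := by
  have (x : F) : ∃ v ∈ K, ∀ y ∈ K, ⟪x - v, y - v⟫ ≤ 0 := by
    obtain ⟨v, hv, hmin⟩ := exists_norm_eq_iInf_of_complete_convex hne hKc.isComplete hKconv x
    exact ⟨v, hv, (norm_eq_iInf_iff_real_inner_le_zero hKconv hv).mp hmin⟩
  choose p hpK hp using this
  exact ⟨p, ⟨hpK, hp⟩⟩

end MetricProjection

theorem IsClosed.frontier_inter_subset_frontier {X : Type*} [TopologicalSpace X]
    {s : Set X} (hs : IsClosed s) (t : Set X) : frontier s ∩ t ⊆ frontier (s ∩ t) := by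
  rintro x ⟨hx, hxt⟩
  rw [hs.frontier_eq] at hx
  exact ⟨subset_closure ⟨hx.1, hxt⟩, fun h ↦ hx.2 (interior_mono inter_subset_left h)⟩

theorem Convex.hausdorffMeasure_frontier_inter_closedBall_le {F : Type*}
    [NormedAddCommGroup F] [InnerProductSpace ℝ F] [ProperSpace F] [MeasurableSpace F]
    [BorelSpace F] {T : Set F} (hTconv : Convex ℝ T) (hTc : IsClosed T) (c : F) (ρ : ℝ)
    {d : ℝ} (hd : 0 ≤ d) : μH[d] (frontier T ∩ closedBall c ρ) ≤ μH[d] (sphere c ρ) := by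
  set K := T ∩ closedBall c ρ
  have hKc : IsClosed K := hTc.inter isClosed_closedBall
  refine (measure_mono (hTc.frontier_inter_subset_frontier _)).trans ?_
  rcases K.eq_empty_or_nonempty with hK | hK
  · simp [K, hK]
  obtain ⟨p, hp⟩ := exists_isMetricProjection hK hKc (hTconv.inter (convex_closedBall c ρ))
  calc μH[d] (frontier K) ≤ μH[d] (p '' sphere c ρ) :=
        measure_mono (hp.frontier_subset_image_sphere hKc inter_subset_right)
    _ ≤ μH[d] (sphere c ρ) := by
        simpa using hp.lipschitzWith.hausdorffMeasure_image_le hd (sphere c ρ)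

theorem Complex.hausdorffMeasure_sphere_le (c : ℂ) {ρ : ℝ} (hρ : 0 ≤ ρ) :
    μH[1] (sphere c ρ) ≤ ENNReal.ofReal (2 * π * ρ) := by
  rw [← abs_of_nonneg hρ, ← image_circleMap_Ioc]
  refine ((lipschitzWith_circleMap c ρ).hausdorffMeasure_image_le zero_le_one _).trans_eq ?_
  rw [hausdorffMeasure_real, Real.volume_Ioc, ENNReal.rpow_one, ← ENNReal.ofReal_coe_nnreal,
    ← ENNReal.ofReal_mul (by positivity), coe_nnabs, abs_of_nonneg hρ]
  ring_nf

theorem EuclideanSpace.hausdorffMeasure_sphere_le (c : EuclideanSpace ℝ (Fin 2)) {ρ : ℝ}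
    (hρ : 0 ≤ ρ) : μH[1] (sphere c ρ) ≤ ENNReal.ofReal (2 * π * ρ) := by
  let e := Complex.orthonormalBasisOneI.repr.toIsometryEquiv
  rw [← e.apply_symm_apply c, ← e.image_sphere, e.hausdorffMeasure_image]
  exact Complex.hausdorffMeasure_sphere_le _ hρ

theorem exists_lt_mul_pow_le_and_le_mul_pow_succ {r q t : ℝ} {N : ℕ} (hN : N ≠ 0) (hr : r ≤ t)
    (ht : t ≤ r * q ^ N) : ∃ k < N, r * q ^ k ≤ t ∧ t ≤ r * q ^ (k + 1) := by
  induction N with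
  | zero => exact absurd rfl hN
  | succ n ih =>
    rcases Nat.eq_zero_or_pos n with rfl | hn
    · exact ⟨0, Nat.one_pos, by simpa using hr, ht⟩
    by_cases htn : t ≤ r * q ^ n
    · obtain ⟨k, hk, hkt⟩ := ih hn.ne' htn
      exact ⟨k, hk.trans n.lt_succ_self, hkt⟩
    · exact ⟨n, n.lt_succ_self, (not_le.mp htn).le, ht⟩

section Annulus

local notation "E" => EuclideanSpace ℝ (Fin 2)

variable {T : Set E}

theorem lintegral_inv_norm_frontier_inter_shell_le (hTconv : Convex ℝ T) (hTc : IsClosed T)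
    {ρ : ℝ} (hρ : 0 < ρ) :
    ∫⁻ x in (closedBall (0 : E) (2 * ρ) \ ball 0 ρ) ∩ frontier T, ENNReal.ofReal ‖x‖⁻¹ ∂μH[1]
      ≤ ENNReal.ofReal (4 * π) := calc
  _ ≤ ∫⁻ _ in (closedBall (0 : E) (2 * ρ) \ ball 0 ρ) ∩ frontier T, ENNReal.ofReal ρ⁻¹ ∂μH[1] :=
      setLIntegral_mono measurable_const fun x hx ↦ ENNReal.ofReal_le_ofReal <|
        inv_anti₀ hρ (by simpa using hx.1.2)
  _ ≤ ENNReal.ofReal ρ⁻¹ * μH[1] (frontier T ∩ closedBall 0 (2 * ρ)) := by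
      rw [setLIntegral_const]
      exact mul_le_mul_right (measure_mono <|
        subset_inter inter_subset_right (inter_subset_left.trans sdiff_subset)) _
  _ ≤ ENNReal.ofReal ρ⁻¹ * ENNReal.ofReal (2 * π * (2 * ρ)) := by
      gcongr
      exact (hTconv.hausdorffMeasure_frontier_inter_closedBall_le hTc 0 _ zero_le_one).trans
        (EuclideanSpace.hausdorffMeasure_sphere_le 0 (by positivity))
  _ = ENNReal.ofReal (4 * π) := by
      rw [← ENNReal.ofReal_mul (by positivity)]
      congr 1
      field_simp
      ring

theorem lintegral_inv_norm_frontier_inter_annulus_le (hTconv : Convex ℝ T) (hTc : IsClosed T)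
    {r R : ℝ} (hr : 0 < r) {N : ℕ} (hN : N ≠ 0) (hRN : R ≤ r * 2 ^ N) :
    ∫⁻ x in (closedBall (0 : E) R \ ball 0 r) ∩ frontier T, ENNReal.ofReal ‖x‖⁻¹ ∂μH[1]
      ≤ N * ENNReal.ofReal (4 * π) := by
  set shell : Fin N → Set E := fun k ↦
    (closedBall 0 (2 * (r * 2 ^ (k : ℕ))) \ ball 0 (r * 2 ^ (k : ℕ))) ∩ frontier T
  have hcover : (closedBall (0 : E) R \ ball 0 r) ∩ frontier T ⊆ ⋃ k, shell k := by
    rintro x ⟨⟨hxR, hxr⟩, hxT⟩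
    rw [mem_closedBall_zero_iff] at hxR
    rw [mem_ball_zero_iff, not_lt] at hxr
    obtain ⟨k, hk, hk₁, hk₂⟩ := exists_lt_mul_pow_le_and_le_mul_pow_succ hN hxr (hxR.trans hRN)
    refine mem_iUnion.mpr ⟨⟨k, hk⟩, ⟨?_, ?_⟩, hxT⟩
    · rw [mem_closedBall_zero_iff]
      exact hk₂.trans_eq (by ring)
    · simpa using hk₁
  calc _ ≤ ∫⁻ x in ⋃ k, shell k, ENNReal.ofReal ‖x‖⁻¹ ∂μH[1] := lintegral_mono_set hcover
    _ ≤ ∑ k, ∫⁻ x in shell k, ENNReal.ofReal ‖x‖⁻¹ ∂μH[1] :=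
        (lintegral_iUnion_le _ _).trans_eq (tsum_fintype _)
    _ ≤ ∑ _k : Fin N, ENNReal.ofReal (4 * π) := Finset.sum_le_sum fun k _ ↦
        lintegral_inv_norm_frontier_inter_shell_le hTconv hTc (by positivity)
    _ = N * ENNReal.ofReal (4 * π) := by simp

end Annulus

/-- Integral over the boundary of a convex set in an annulus: for a closed convex
`T ⊆ ℝ²` and `R > r > 0`, the arc-length integral of `‖x‖⁻¹` over
`D(R,r) ∩ ∂T` is at most `4π·⌈log₂(R/r)⌉`, where `D(R,r)` is the annulus with inner
radius `r` and outer radius `R`. -/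
theorem stmt_11 (T : Set (EuclideanSpace ℝ (Fin 2))) (hTc : IsClosed T)
    (hTconv : Convex ℝ T) (R r : ℝ) (hr : 0 < r) (hRr : r < R) :
    (∫ x in ((Metric.closedBall (0 : EuclideanSpace ℝ (Fin 2)) R \
          Metric.ball (0 : EuclideanSpace ℝ (Fin 2)) r) ∩ frontier T),
        ‖x‖⁻¹ ∂(Measure.hausdorffMeasure 1)) ≤
      4 * Real.pi * (⌈Real.logb 2 (R / r)⌉ : ℝ) := by
  have hlog : 0 < logb 2 (R / r) := logb_pos one_lt_two ((one_lt_div hr).mpr hRr)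
  set N := ⌈logb 2 (R / r)⌉₊
  have hN : N ≠ 0 := (Nat.ceil_pos.mpr hlog).ne'
  have hRN : R ≤ r * 2 ^ N := by
    have := (logb_le_iff_le_rpow one_lt_two (div_pos (hr.trans hRr) hr)).mp
      (Nat.le_ceil (logb 2 (R / r)))
    rw [rpow_natCast, div_le_iff₀ hr] at this
    linarith
  rw [← natCast_ceil_eq_intCast_ceil hlog.le, integral_eq_lintegral_of_nonneg_ae
    (ae_of_all _ fun x ↦ inv_nonneg.mpr (norm_nonneg x)) (by fun_prop)]
  refine ENNReal.toReal_le_of_le_ofReal (by positivity) ?_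
  calc _ ≤ N * ENNReal.ofReal (4 * π) :=
        lintegral_inv_norm_frontier_inter_annulus_le hTconv hTc hr hN hRN
    _ = ENNReal.ofReal (4 * π * N) := by
        rw [ENNReal.ofReal_mul' N.cast_nonneg, ENNReal.ofReal_natCast, mul_comm]
end

section
/- Let c, z ∈ R^d with ||c|| = 1. If i ≥ ⌈log₂(||z|| + d)⌉ + 2, then the angle between 2^{i-1}c + z and 2^i c + z is at most 5(||z|| + d)/2^{i+1}. -/
/-!
Put `P = 2^(i-2)`, so that `‖z‖ + d ≤ P` and the vectors are `a = 2P c + z`, `b = 4P c + z`.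
Writing `s = ⟪c, z⟫`, the inner product `⟪a, b⟫ = 8P² + 6Ps + ‖z‖²` is positive, so the angle
`θ` between them is acute and `θ ≤ tan θ`. The Gram determinant of `a, b` is
`(2P)² (‖z‖² - s²)`, hence `tan θ = 2P √(‖z‖² - s²) / ⟪a, b⟫`, and the bound reduces to an
elementary inequality in `P`, `‖z‖`, `s`.
-/

open Real InnerProductGeometry RealInnerProductSpace

section

variable {V : Type*} [NormedAddCommGroup V] [InnerProductSpace ℝ V]

theorem ne_zero_of_inner_pos {x y : V} (h : 0 < ⟪x, y⟫) : x ≠ 0 ∧ y ≠ 0 :=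
  ⟨by rintro rfl; simp at h, by rintro rfl; simp at h⟩

theorem angle_lt_pi_div_two_of_inner_pos {x y : V} (h : 0 < ⟪x, y⟫) : angle x y < π / 2 := by
  obtain ⟨hx, hy⟩ := ne_zero_of_inner_pos h
  exact arccos_lt_pi_div_two.2 (by positivity)

/-- `angle ≤ tan angle`, with the tangent written through the Gram determinant. -/
theorem angle_le_sqrt_gram_div_inner {x y : V} (h : 0 < ⟪x, y⟫) :
    angle x y ≤ √(⟪x, x⟫ * ⟪y, y⟫ - ⟪x, y⟫ * ⟪x, y⟫) / ⟪x, y⟫ := by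
  obtain ⟨hx, hy⟩ := ne_zero_of_inner_pos h
  calc angle x y ≤ tan (angle x y) :=
        le_tan (angle_nonneg x y) (angle_lt_pi_div_two_of_inner_pos h)
    _ = sin (angle x y) * (‖x‖ * ‖y‖) / (cos (angle x y) * (‖x‖ * ‖y‖)) := by
        rw [tan_eq_sin_div_cos, mul_div_mul_right _ _ (by positivity)]
    _ = _ := by rw [sin_angle_mul_norm_mul_norm, cos_angle_mul_norm_mul_norm]

variable {c z : V}

theorem inner_smul_add_smul_add (hc : ‖c‖ = 1) (α β : ℝ) :
    ⟪α • c + z, β • c + z⟫ = α * β + (α + β) * ⟪c, z⟫ + ‖z‖ ^ 2 := by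
  simp only [inner_add_left, inner_add_right, real_inner_smul_left, real_inner_smul_right,
    real_inner_self_eq_norm_sq, hc, real_inner_comm z c]
  ring

theorem angle_smul_add_smul_add_le (hc : ‖c‖ = 1) {α β : ℝ}
    (h : 0 < α * β + (α + β) * ⟪c, z⟫ + ‖z‖ ^ 2) :
    angle (α • c + z) (β • c + z) ≤
      |β - α| * √(‖z‖ ^ 2 - ⟪c, z⟫ ^ 2) / (α * β + (α + β) * ⟪c, z⟫ + ‖z‖ ^ 2) := by
  rw [← inner_smul_add_smul_add hc] at h ⊢
  refine (angle_le_sqrt_gram_div_inner h).trans_eq ?_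
  have hgram : ⟪α • c + z, α • c + z⟫ * ⟪β • c + z, β • c + z⟫
      - ⟪α • c + z, β • c + z⟫ * ⟪α • c + z, β • c + z⟫
      = (β - α) ^ 2 * (‖z‖ ^ 2 - ⟪c, z⟫ ^ 2) := by
    simp only [inner_smul_add_smul_add hc]; ring
  rw [hgram, sqrt_mul (sq_nonneg _), sqrt_sq_eq_abs]

end

theorem le_two_zpow_of_ceil_logb_le {x : ℝ} (hx : 0 ≤ x) {k : ℤ} (h : ⌈logb 2 x⌉ ≤ k) :
    x ≤ 2 ^ k := by
  have hclog : ⌈logb 2 x⌉ = Int.clog 2 x := by exact_mod_cast ceil_logb_natCast (b := 2) hx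
  calc x ≤ ((2 : ℕ) : ℝ) ^ Int.clog 2 x := Int.self_le_zpow_clog one_lt_two x
    _ ≤ 2 ^ k := by
      rw [Nat.cast_ofNat, ← hclog]; exact zpow_le_zpow_right₀ one_le_two h

section

variable {P N R s : ℝ}

theorem eight_mul_sq_add_pos (hP : 0 < P) (hNP : N ≤ P) (hs : |s| ≤ N) :
    0 < 8 * P ^ 2 + 6 * P * s + N ^ 2 := by
  have hsN := neg_le_of_abs_le hs
  nlinarith [mul_nonneg hP.le (neg_le_iff_add_nonneg.1 hsN),
    mul_pos (by linarith : 0 < 4 * P - N) (by linarith : 0 < 2 * P - N)]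

theorem sixteen_mul_sq_mul_sqrt_le (hNR : N ≤ R) (hRP : R ≤ P) (hs : |s| ≤ N) :
    16 * P ^ 2 * √(N ^ 2 - s ^ 2) ≤ 5 * R * (8 * P ^ 2 + 6 * P * s + N ^ 2) := by
  have hN : 0 ≤ N := (abs_nonneg s).trans hs
  have hP : 0 ≤ P := by linarith
  have hsN := neg_le_of_abs_le hs
  set u := √(N ^ 2 - s ^ 2)
  have hus : u ^ 2 + s ^ 2 = N ^ 2 := by
    rw [sq_sqrt (sub_nonneg.2 (sq_le_sq' hsN (le_of_abs_le hs)))]; ring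
  -- `(8u - 15s)² + (15u + 8s)² = 17² (u² + s²)`
  have hCS : 8 * u - 15 * s ≤ 17 * N := by nlinarith [sq_nonneg (15 * u + 8 * s)]
  have huN : u ≤ N := by nlinarith
  have hQ : 0 ≤ 8 * P ^ 2 + 6 * P * s + N ^ 2 := by
    nlinarith [mul_nonneg hP (neg_le_iff_add_nonneg.1 hsN),
      mul_nonneg (by linarith : 0 ≤ 4 * P - N) (by linarith : 0 ≤ 2 * P - N)]
  have hkey : 16 * P ^ 2 * u ≤ 5 * N * (8 * P ^ 2 + 6 * P * s) := by
    rcases le_or_gt 0 s with hs0 | hs0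
    · nlinarith [mul_nonneg (mul_nonneg hN hP) hs0, mul_le_mul_of_nonneg_left huN (sq_nonneg P)]
    · nlinarith [mul_nonneg (mul_nonneg hP (sub_nonneg.2 (hNR.trans hRP))) (neg_nonneg.2 hs0.le),
        mul_le_mul_of_nonneg_left (show 3 * N ≤ 20 * N + 15 * s - 8 * u by linarith)
          (sq_nonneg P)]
  nlinarith [mul_nonneg (sub_nonneg.2 hNR) hQ, pow_nonneg hN 3]

end

/-- Angle bound between consecutive interpolated objectives: for `‖c‖ = 1` and
`i ≥ ⌈log₂(‖z‖ + d)⌉ + 2`, the angle between `2^{i-1}c + z` and `2^i c + z` is at most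
`5(‖z‖ + d)/2^{i+1}`. -/
theorem stmt_13 (d : ℕ) (c z : EuclideanSpace ℝ (Fin d)) (hc : ‖c‖ = 1) (i : ℕ)
    (hi : ⌈Real.logb 2 (‖z‖ + d)⌉ + 2 ≤ (i : ℤ)) :
    InnerProductGeometry.angle ((2 : ℝ) ^ ((i : ℤ) - 1) • c + z)
        ((2 : ℝ) ^ ((i : ℤ)) • c + z) ≤
      5 * (‖z‖ + d) / 2 ^ (i + 1) := by
  set P : ℝ := 2 ^ ((i : ℤ) - 2)
  have hP : 0 < P := by positivity
  have hRP : ‖z‖ + d ≤ P := le_two_zpow_of_ceil_logb_le (by positivity) (by omega)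
  have hpow (k : ℤ) : (2 : ℝ) ^ ((i : ℤ) - 2 + k) = 2 ^ k * P := by
    rw [zpow_add₀ two_ne_zero, mul_comm]
  have h2P : (2 : ℝ) ^ ((i : ℤ) - 1) = 2 * P := by convert hpow 1 using 2 <;> ring
  have h4P : (2 : ℝ) ^ (i : ℤ) = 4 * P := by convert hpow 2 using 2 <;> ring
  have h8P : (2 : ℝ) ^ (i + 1) = 8 * P := by
    rw [← zpow_natCast]; convert hpow 3 using 2 <;> push_cast <;> ring
  rw [h2P, h4P, h8P]
  have hs : |⟪c, z⟫| ≤ ‖z‖ := by simpa [hc] using abs_real_inner_le_norm c z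
  have hQ : 0 < 2 * P * (4 * P) + (2 * P + 4 * P) * ⟪c, z⟫ + ‖z‖ ^ 2 := by
    linarith [eight_mul_sq_add_pos hP (by linarith) hs]
  refine (angle_smul_add_smul_add_le hc hQ).trans ?_
  rw [div_le_div_iff₀ hQ (by positivity), abs_of_pos (by linarith : 0 < 4 * P - 2 * P)]
  linarith [sixteen_mul_sq_mul_sqrt_le (by linarith) hRP hs]
end

section
/- Let B ∈ R^{d×d} be invertible with every column of Euclidean norm at most 2. For m ≥ 0, let C_m = {x ∈ R^d : B^{-1}x ≥ m coordinatewise}. Let c, c' ∈ R^d be fixed and let Z ∈ R^d be a random vector with 1-log-Lipschitz density μ (i.e., μ(x)/μ(y) ≤ exp(||x - y||) for all x, y). Then for m = ln(1/0.99)/(2d), Pr[[c + Z, c' + Z] ∩ C_m ≠ ∅] ≥ 0.99 · Pr[[c + Z, c' + Z] ∩ C_0 ≠ ∅]. -/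
/-!
Translate by `t = B (m, …, m)`. Since `B⁻¹ t = (m, …, m)`, translation by `t` maps `C_0` into
`C_m`, so if the segment of `z - t` meets `C_0` then the segment of `z` meets `C_m`. The column
bound gives `‖t‖ ≤ 2 d m = ln (1 / 0.99)`, and a `1`-log-Lipschitz density loses at most the
factor `exp (-‖t‖) ≥ 0.99` under translation by `t`.
-/

open MeasureTheory
open scoped ENNReal Matrix

theorem MeasureTheory.Measure.const_mul_withDensity_le_withDensity_preimage_sub {G : Type*}
    [MeasurableSpace G] [AddGroup G] [MeasurableAdd G] (μ : Measure G) [μ.IsAddRightInvariant]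
    [SFinite μ] {g : G → ℝ≥0∞} {r : ℝ≥0∞} {t : G} (hg : ∀ x, r * g x ≤ g (x + t))
    (A : Set G) :
    r * μ.withDensity g A ≤ μ.withDensity g ((· - t) ⁻¹' A) := by
  have hshift : ∫⁻ z in (· - t) ⁻¹' A, g (z - t + t) ∂μ = ∫⁻ y in A, g (y + t) ∂μ :=
    (measurePreserving_sub_right μ t).setLIntegral_comp_preimage_emb
      (measurableEmbedding_subRight t) (fun y => g (y + t)) A
  simp only [sub_add_cancel] at hshift
  rw [withDensity_apply' _, withDensity_apply' _, hshift]
  exact (lintegral_const_mul_le r g).trans (lintegral_mono hg)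

theorem exp_neg_norm_mul_le_apply_add {E : Type*} [SeminormedAddCommGroup E] {f : E → ℝ}
    (hf : ∀ x y, f x ≤ f y * Real.exp ‖x - y‖) (x t : E) :
    Real.exp (-‖t‖) * f x ≤ f (x + t) := by
  have h := hf x (x + t)
  rw [norm_sub_rev, add_sub_cancel_left] at h
  calc Real.exp (-‖t‖) * f x ≤ Real.exp (-‖t‖) * (f (x + t) * Real.exp ‖t‖) := by gcongr
    _ = f (x + t) := by
      rw [mul_left_comm, ← Real.exp_add, neg_add_cancel, Real.exp_zero, mul_one]

theorem preimage_sub_setOf_segment_inter_nonempty_subset {E : Type*} [AddCommGroup E]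
    [Module ℝ E] {C C' : Set E} {t : E} (hCC' : ∀ x ∈ C, x + t ∈ C') (c c' : E) :
    (· - t) ⁻¹' {z | (segment ℝ (c + z) (c' + z) ∩ C).Nonempty} ⊆
      {z | (segment ℝ (c + z) (c' + z) ∩ C').Nonempty} := by
  rintro z ⟨x, hx, hxC⟩
  refine ⟨x + t, ?_, hCC' x hxC⟩
  have := (mem_segment_translate ℝ t).2 hx
  simpa only [add_comm t, add_assoc, sub_add_cancel] using this

theorem Matrix.inv_mulVec_add_mulVec {n R : Type*} [Fintype n] [DecidableEq n] [CommRing R]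
    {B : Matrix n n R} (hB : IsUnit B) (x v : n → R) :
    B⁻¹ *ᵥ (x + B *ᵥ v) = B⁻¹ *ᵥ x + v := by
  rw [Matrix.mulVec_add, Matrix.mulVec_mulVec,
    Matrix.nonsing_inv_mul B ((Matrix.isUnit_iff_isUnit_det B).1 hB), Matrix.one_mulVec]

theorem Matrix.norm_toLp_mulVec_const_le {m n : Type*} [Fintype m] [Fintype n]
    (B : Matrix m n ℝ) {K a : ℝ} (ha : 0 ≤ a) (hcol : ∀ j, Real.sqrt (∑ i, B i j ^ 2) ≤ K) :
    ‖WithLp.toLp 2 (B *ᵥ fun _ => a)‖ ≤ Fintype.card n * K * a := by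
  have hcols : WithLp.toLp 2 (B *ᵥ fun _ => a) = ∑ j, a • WithLp.toLp 2 (fun i => B i j) := by
    ext i
    simp [Matrix.mulVec, dotProduct, mul_comm]
  have hcolnorm (j : n) : ‖WithLp.toLp 2 (fun i => B i j)‖ ≤ K := by
    simpa [EuclideanSpace.norm_eq] using hcol j
  calc ‖WithLp.toLp 2 (B *ᵥ fun _ => a)‖ ≤ ∑ j, ‖a • WithLp.toLp 2 (fun i => B i j)‖ := by
        rw [hcols]; exact norm_sum_le _ _
    _ ≤ ∑ _j : n, a * K := by
        gcongr with j
        rw [norm_smul, Real.norm_of_nonneg ha]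
        gcongr
        exact hcolnorm j
    _ = Fintype.card n * K * a := by
        simp only [Finset.sum_const, Finset.card_univ, nsmul_eq_mul]; ring

theorem stmt_14_general (d : ℕ) (B : Matrix (Fin d) (Fin d) ℝ) (hB : IsUnit B)
    (hcol : ∀ j, Real.sqrt (∑ i, B i j ^ 2) ≤ 2)
    (c c' : EuclideanSpace ℝ (Fin d))
    (f : EuclideanSpace ℝ (Fin d) → ℝ)
    (hlip : ∀ x y, f x ≤ f y * Real.exp ‖x - y‖) :
    ENNReal.ofReal 0.99 *
        (volume.withDensity fun x => ENNReal.ofReal (f x))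
          {z : EuclideanSpace ℝ (Fin d) |
            (segment ℝ (c + z) (c' + z) ∩
              {x : EuclideanSpace ℝ (Fin d) |
                ∀ i, (0 : ℝ) ≤ B⁻¹.mulVec (fun j => x j) i}).Nonempty} ≤
      (volume.withDensity fun x => ENNReal.ofReal (f x))
        {z : EuclideanSpace ℝ (Fin d) |
          (segment ℝ (c + z) (c' + z) ∩
            {x : EuclideanSpace ℝ (Fin d) |
              ∀ i, Real.log (1 / 0.99) / (2 * d) ≤ B⁻¹.mulVec (fun j => x j) i}).Nonempty} := by
  set L := Real.log (1 / 0.99)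
  set m := L / (2 * d)
  set t : EuclideanSpace ℝ (Fin d) := WithLp.toLp 2 (B *ᵥ fun _ => m)
  have hL : 0 ≤ L := Real.log_nonneg (by norm_num)
  have ht : ‖t‖ ≤ L := calc
    ‖t‖ ≤ d * 2 * m := by simpa using Matrix.norm_toLp_mulVec_const_le B (by positivity) hcol
    -- `2 * d / (2 * d)` is `0`, not `1`, when `d = 0`
    _ = L * (2 * d / (2 * d)) := by ring
    _ ≤ L := mul_le_of_le_one_right hL (div_self_le_one _)
  have h99 : (0.99 : ℝ) ≤ Real.exp (-‖t‖) := calc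
    (0.99 : ℝ) = Real.exp (-L) := by rw [Real.exp_neg, Real.exp_log (by norm_num)]; norm_num
    _ ≤ Real.exp (-‖t‖) := by gcongr
  have hdensity (x) : ENNReal.ofReal (Real.exp (-‖t‖)) * ENNReal.ofReal (f x) ≤
      ENNReal.ofReal (f (x + t)) := by
    rw [← ENNReal.ofReal_mul (Real.exp_pos _).le]
    exact ENNReal.ofReal_le_ofReal (exp_neg_norm_mul_le_apply_add hlip x t)
  have hcone (x : EuclideanSpace ℝ (Fin d)) (hx : ∀ i, (0 : ℝ) ≤ (B⁻¹ *ᵥ ⇑x) i) (i) :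
      m ≤ (B⁻¹ *ᵥ ⇑(x + t)) i := by
    rw [WithLp.ofLp_add, Matrix.inv_mulVec_add_mulVec hB, Pi.add_apply]
    linarith [hx i]
  calc _ ≤ ENNReal.ofReal (Real.exp (-‖t‖)) * _ := by
        gcongr ?_ * _; exact ENNReal.ofReal_le_ofReal h99
    _ ≤ _ := Measure.const_mul_withDensity_le_withDensity_preimage_sub volume hdensity _
    _ ≤ _ := measure_mono (preimage_sub_setOf_segment_inter_nonempty_subset hcone c c')

/-- Segment hits the middle of the cone: for an invertible matrix `B` with columns of
norm at most 2, `C_m = {x : B⁻¹x ≥ m}`, fixed `c, c'` and a random vector `Z` with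
`1`-log-Lipschitz density, with `m = ln(1/0.99)/(2d)`,
`Pr[[c+Z, c'+Z] ∩ C_m ≠ ∅] ≥ 0.99·Pr[[c+Z, c'+Z] ∩ C_0 ≠ ∅]`. -/
theorem stmt_14 (d : ℕ) (hd : 0 < d) (B : Matrix (Fin d) (Fin d) ℝ) (hB : IsUnit B)
    (hcol : ∀ j, Real.sqrt (∑ i, B i j ^ 2) ≤ 2)
    (c c' : EuclideanSpace ℝ (Fin d))
    (f : EuclideanSpace ℝ (Fin d) → ℝ) (hfpos : ∀ x, 0 < f x)
    (hlip : ∀ x y, f x ≤ f y * Real.exp ‖x - y‖)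
    (hprob : ∫ x, f x = 1) :
    ENNReal.ofReal 0.99 *
        (volume.withDensity fun x => ENNReal.ofReal (f x))
          {z : EuclideanSpace ℝ (Fin d) |
            (segment ℝ (c + z) (c' + z) ∩
              {x : EuclideanSpace ℝ (Fin d) |
                ∀ i, (0 : ℝ) ≤ B⁻¹.mulVec (fun j => x j) i}).Nonempty} ≤
      (volume.withDensity fun x => ENNReal.ofReal (f x))
        {z : EuclideanSpace ℝ (Fin d) |
          (segment ℝ (c + z) (c' + z) ∩
            {x : EuclideanSpace ℝ (Fin d) |
              ∀ i, Real.log (1 / 0.99) / (2 * d) ≤ B⁻¹.mulVec (fun j => x j) i}).Nonempty} :=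
  stmt_14_general d B hB hcol c c' f hlip
end

section
/- Let {s_1, …, s_n} ⊂ S^{d-1} be an η-dense subset of the unit sphere with η ≤ 1/8, and let A ∈ R^{n×d} have rows a_1, …, a_n with ||a_i - s_i|| ≤ η for each i. Let b ∈ [1-η, 1+η]^n. Then (1-2η)·B^d ⊆ {x ∈ R^d : Ax ≤ b} ⊆ (1+4η)·B^d. -/
/-!
A row `aᵢ` is within `η` of a unit vector `sᵢ`, so `‖aᵢ‖ ≤ 1 + η` and Cauchy–Schwarz puts the
ball of radius `1 - 2η` inside every half-space `⟪aᵢ, x⟫ ≤ 1 - η ≤ bᵢ`. Conversely, for `x ≠ 0`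
density gives an `sᵢ` within `η` of the direction `u = x / ‖x‖`; then `⟪sᵢ, u⟫ ≥ 1 - η²/2`, hence
`⟪aᵢ, u⟫ ≥ 1 - η - η²/2`, and the constraint `⟪aᵢ, x⟫ ≤ 1 + η` bounds `‖x‖` by
`(1 + η) / (1 - η - η²/2) ≤ 1 + 4η`.
-/

open RealInnerProductSpace

section InnerProductSpace

variable {E : Type*} [NormedAddCommGroup E] [InnerProductSpace ℝ E]

theorem inner_le_one_sub_of_norm_sub_le {a s x : E} {η : ℝ} (hs : ‖s‖ = 1)
    (ha : ‖a - s‖ ≤ η) (hx : ‖x‖ ≤ 1 - 2 * η) : ⟪a, x⟫ ≤ 1 - η := by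
  have ha_norm : ‖a‖ ≤ 1 + η := by
    linarith [norm_le_norm_add_norm_sub' a s]
  have hη : 0 ≤ 1 + η := (norm_nonneg a).trans ha_norm
  calc ⟪a, x⟫ ≤ ‖a‖ * ‖x‖ := real_inner_le_norm a x
    _ ≤ (1 + η) * (1 - 2 * η) := by gcongr
    _ ≤ 1 - η := by nlinarith [sq_nonneg η]

theorem one_sub_sq_div_two_le_inner_of_norm_sub_le {u s : E} {η : ℝ} (hu : ‖u‖ = 1)
    (hs : ‖s‖ = 1) (h : ‖u - s‖ ≤ η) : 1 - η ^ 2 / 2 ≤ ⟪s, u⟫ := by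
  have hsq : ‖u - s‖ ^ 2 ≤ η ^ 2 := pow_le_pow_left₀ (norm_nonneg _) h 2
  rw [norm_sub_sq_real, hu, hs, real_inner_comm] at hsq
  linarith

theorem one_sub_sub_le_inner_of_norm_sub_le {u s a : E} {η : ℝ} (hu : ‖u‖ = 1)
    (hs : ‖s‖ = 1) (hus : ‖u - s‖ ≤ η) (ha : ‖a - s‖ ≤ η) :
    1 - η - η ^ 2 / 2 ≤ ⟪a, u⟫ := by
  have hsu := one_sub_sq_div_two_le_inner_of_norm_sub_le hu hs hus
  have hdiff : -η ≤ ⟪a - s, u⟫ := by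
    have := neg_abs_le ⟪a - s, u⟫
    have := abs_real_inner_le_norm (a - s) u
    rw [hu, mul_one] at this
    linarith
  rw [inner_sub_left] at hdiff
  linarith

theorem norm_le_of_forall_inner_le_of_dense {ι : Type*} {s a : ι → E} {b : ι → ℝ} {η : ℝ}
    (hη0 : 0 ≤ η) (hη : η ≤ 1 / 8) (hs : ∀ i, ‖s i‖ = 1)
    (hdense : ∀ u : E, ‖u‖ = 1 → ∃ i, ‖u - s i‖ ≤ η) (ha : ∀ i, ‖a i - s i‖ ≤ η)
    (hb : ∀ i, b i ≤ 1 + η) {x : E} (hx : ∀ i, ⟪a i, x⟫ ≤ b i) : ‖x‖ ≤ 1 + 4 * η := by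
  rcases eq_or_ne x 0 with rfl | hx0
  · simp only [norm_zero]
    linarith
  set u := ‖x‖⁻¹ • x
  have hu : ‖u‖ = 1 := norm_smul_inv_norm hx0
  obtain ⟨i, hi⟩ := hdense u hu
  have hxu : ⟪a i, x⟫ = ‖x‖ * ⟪a i, u⟫ := by
    rw [real_inner_smul_right, mul_inv_cancel_left₀ (norm_ne_zero_iff.2 hx0)]
  have hlow := one_sub_sub_le_inner_of_norm_sub_le hu (hs i) hi (ha i)
  have hkey : ‖x‖ * (1 - η - η ^ 2 / 2) ≤ 1 + η :=
    calc ‖x‖ * (1 - η - η ^ 2 / 2) ≤ ‖x‖ * ⟪a i, u⟫ := by gcongr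
      _ = ⟪a i, x⟫ := hxu.symm
      _ ≤ 1 + η := (hx i).trans (hb i)
  have hpos : 0 < 1 - η - η ^ 2 / 2 := by nlinarith
  have hratio : 1 + η ≤ (1 + 4 * η) * (1 - η - η ^ 2 / 2) := by nlinarith
  exact le_of_mul_le_mul_right (hkey.trans hratio) hpos

end InnerProductSpace

/-- Smoothed dense constraints give a body close to the unit ball: if `{s₁,…,sₙ}` is an
`η`-dense subset of the unit sphere with `η ≤ 1/8`, the rows `aᵢ` of `A` satisfy
`‖aᵢ - sᵢ‖ ≤ η`, and `b ∈ [1-η, 1+η]ⁿ`, then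
`(1-2η)·B^d ⊆ {x : Ax ≤ b} ⊆ (1+4η)·B^d`. -/
theorem stmt_15 (d n : ℕ) (η : ℝ) (hη0 : 0 < η) (hη : η ≤ 1 / 8)
    (s : Fin n → EuclideanSpace ℝ (Fin d)) (hs : ∀ i, ‖s i‖ = 1)
    (hdense : ∀ x : EuclideanSpace ℝ (Fin d), ‖x‖ = 1 → ∃ i, ‖x - s i‖ ≤ η)
    (a : Fin n → EuclideanSpace ℝ (Fin d)) (ha : ∀ i, ‖a i - s i‖ ≤ η)
    (b : Fin n → ℝ) (hb : ∀ i, b i ∈ Set.Icc (1 - η) (1 + η)) :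
    Metric.closedBall (0 : EuclideanSpace ℝ (Fin d)) (1 - 2 * η) ⊆
        {x : EuclideanSpace ℝ (Fin d) | ∀ i, (inner ℝ (a i) x : ℝ) ≤ b i} ∧
      {x : EuclideanSpace ℝ (Fin d) | ∀ i, (inner ℝ (a i) x : ℝ) ≤ b i} ⊆
        Metric.closedBall (0 : EuclideanSpace ℝ (Fin d)) (1 + 4 * η) := by
  constructor
  · intro x hx i
    rw [mem_closedBall_zero_iff] at hx
    exact (inner_le_one_sub_of_norm_sub_le (hs i) (ha i) hx).trans (hb i).1
  · intro x hx
    exact mem_closedBall_zero_iff.2 <| norm_le_of_forall_inner_le_of_dense hη0.le hη hs hdense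
      ha (fun i => (hb i).2) hx
end

section
/- Let 0 < η ≤ 1/8 and let P ⊆ R^d be a convex body with (1-2η)B^d ⊆ P ⊆ (1+4η)B^d. Then its polar P° = {y ∈ R^d : ⟨x,y⟩ ≤ 1 for all x ∈ P} satisfies (1-4η)B^d ⊆ P° ⊆ (1+3η)B^d, and moreover every facet F of P° has Euclidean diameter at most 8√η. -/
/-- Polar of a nearly-round body and small facets: if `(1-2η)B^d ⊆ P ⊆ (1+4η)B^d` with
`0 < η ≤ 1/8` and `P` a convex body, then the polar `P° = {y : ⟨x,y⟩ ≤ 1 ∀x ∈ P}`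
satisfies `(1-4η)B^d ⊆ P° ⊆ (1+3η)B^d`, and every face of `P°` cut out by a supporting
hyperplane `{y : ⟨y,v⟩ = 1}` has Euclidean diameter at most `8√η`. -/
theorem stmt_16 (d : ℕ) (η : ℝ) (hη0 : 0 < η) (hη : η ≤ 1 / 8)
    (P : Set (EuclideanSpace ℝ (Fin d))) (hPconv : Convex ℝ P) (hPcomp : IsCompact P)
    (hlow : Metric.closedBall (0 : EuclideanSpace ℝ (Fin d)) (1 - 2 * η) ⊆ P)
    (hup : P ⊆ Metric.closedBall (0 : EuclideanSpace ℝ (Fin d)) (1 + 4 * η)) :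
    (Metric.closedBall (0 : EuclideanSpace ℝ (Fin d)) (1 - 4 * η) ⊆
        {y : EuclideanSpace ℝ (Fin d) | ∀ x ∈ P, (inner ℝ x y : ℝ) ≤ 1}) ∧
      ({y : EuclideanSpace ℝ (Fin d) | ∀ x ∈ P, (inner ℝ x y : ℝ) ≤ 1} ⊆
        Metric.closedBall (0 : EuclideanSpace ℝ (Fin d)) (1 + 3 * η)) ∧
      (∀ v : EuclideanSpace ℝ (Fin d),
        (∀ y ∈ {y : EuclideanSpace ℝ (Fin d) | ∀ x ∈ P, (inner ℝ x y : ℝ) ≤ 1},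
          (inner ℝ y v : ℝ) ≤ 1) →
        Metric.diam ({y : EuclideanSpace ℝ (Fin d) | ∀ x ∈ P, (inner ℝ x y : ℝ) ≤ 1} ∩
            {y : EuclideanSpace ℝ (Fin d) | (inner ℝ y v : ℝ) = 1}) ≤
          8 * Real.sqrt η) := by
  -- Part 1
  have part1 : Metric.closedBall (0 : EuclideanSpace ℝ (Fin d)) (1 - 4 * η) ⊆
      {y : EuclideanSpace ℝ (Fin d) | ∀ x ∈ P, (inner ℝ x y : ℝ) ≤ 1} := by
    intro y hy x hx
    rw [Metric.mem_closedBall, dist_zero_right] at hy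
    have hx' := hup hx
    rw [Metric.mem_closedBall, dist_zero_right] at hx'
    have hcs := real_inner_le_norm x y
    nlinarith [norm_nonneg x, norm_nonneg y]
  -- Part 2
  have part2 : {y : EuclideanSpace ℝ (Fin d) | ∀ x ∈ P, (inner ℝ x y : ℝ) ≤ 1} ⊆
      Metric.closedBall (0 : EuclideanSpace ℝ (Fin d)) (1 + 3 * η) := by
    intro y hy
    rw [Metric.mem_closedBall, dist_zero_right]
    rcases eq_or_ne y 0 with rfl | hy0
    · simp; nlinarith
    · have hny : 0 < ‖y‖ := norm_pos_iff.mpr hy0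
      set x : EuclideanSpace ℝ (Fin d) := ((1 - 2 * η) * ‖y‖⁻¹) • y with hxdef
      have hxP : x ∈ P := by
        apply hlow
        rw [Metric.mem_closedBall, dist_zero_right, hxdef, norm_smul]
        have : ‖(1 - 2 * η) * ‖y‖⁻¹‖ = (1 - 2 * η) * ‖y‖⁻¹ := by
          rw [Real.norm_eq_abs, abs_of_nonneg]
          have h2 : (0:ℝ) ≤ 1 - 2 * η := by linarith
          positivity
        rw [this]
        rw [mul_assoc, inv_mul_cancel₀ hny.ne', mul_one]
      have := hy x hxP
      rw [hxdef, real_inner_smul_left, real_inner_self_eq_norm_sq] at this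
      have h1 : (1 - 2 * η) * ‖y‖ ≤ 1 := by
        have heq : (1 - 2 * η) * ‖y‖⁻¹ * ‖y‖ ^ 2 = (1 - 2 * η) * ‖y‖ := by
          field_simp
        linarith [heq ▸ this]
      nlinarith
  refine ⟨part1, part2, ?_⟩
  intro v hv
  rcases eq_or_ne v 0 with rfl | hv0
  · have : ({y : EuclideanSpace ℝ (Fin d) | ∀ x ∈ P, (inner ℝ x y : ℝ) ≤ 1} ∩
        {y : EuclideanSpace ℝ (Fin d) | (inner ℝ y (0 : EuclideanSpace ℝ (Fin d)) : ℝ) = 1}) = ∅ := by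
      ext y; simp
    rw [this, Metric.diam_empty]
    positivity
  · have hnv : 0 < ‖v‖ := norm_pos_iff.mpr hv0
    -- bound on ‖v‖: (1-4η)‖v‖ ≤ 1
    have hvb : (1 - 4 * η) * ‖v‖ ≤ 1 := by
      have hmem : ((1 - 4 * η) * ‖v‖⁻¹) • v ∈
          {y : EuclideanSpace ℝ (Fin d) | ∀ x ∈ P, (inner ℝ x y : ℝ) ≤ 1} := by
        apply part1
        rw [Metric.mem_closedBall, dist_zero_right, norm_smul, Real.norm_eq_abs,
          abs_of_nonneg (mul_nonneg (by linarith) (by positivity)),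
          mul_assoc, inv_mul_cancel₀ hnv.ne', mul_one]
      have := hv _ hmem
      rw [real_inner_smul_left, real_inner_self_eq_norm_sq] at this
      have heq : (1 - 4 * η) * ‖v‖⁻¹ * ‖v‖ ^ 2 = (1 - 4 * η) * ‖v‖ := by
        field_simp
      linarith [heq ▸ this]
    apply Metric.diam_le_of_forall_dist_le (by positivity)
    rintro y₁ ⟨h1Q, h1v⟩ y₂ ⟨h2Q, h2v⟩
    have hn1 : ‖y₁‖ ≤ 1 + 3 * η := by
      have := part2 h1Q; rwa [Metric.mem_closedBall, dist_zero_right] at this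
    have hn2 : ‖y₂‖ ≤ 1 + 3 * η := by
      have := part2 h2Q; rwa [Metric.mem_closedBall, dist_zero_right] at this
    have h1v' : (inner ℝ y₁ v : ℝ) = 1 := h1v
    have h2v' : (inner ℝ y₂ v : ℝ) = 1 := h2v
    have hsum : (inner ℝ (y₁ + y₂) v : ℝ) = 2 := by
      rw [inner_add_left, h1v', h2v']; norm_num
    have hcs : (2 : ℝ) ≤ ‖y₁ + y₂‖ * ‖v‖ := hsum ▸ real_inner_le_norm (y₁ + y₂) v
    have hlb : 2 * (1 - 4 * η) ≤ ‖y₁ + y₂‖ := by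
      nlinarith [norm_nonneg (y₁ + y₂), hnv]
    -- parallelogram identity
    have hpar : ‖y₁ - y₂‖ ^ 2 + ‖y₁ + y₂‖ ^ 2 = 2 * (‖y₁‖ ^ 2 + ‖y₂‖ ^ 2) := by
      have := parallelogram_law_with_norm ℝ y₁ y₂
      nlinarith [this]
    have hsq : ‖y₁ - y₂‖ ^ 2 ≤ 64 * η := by nlinarith [norm_nonneg (y₁ + y₂), norm_nonneg y₁, norm_nonneg y₂]
    rw [dist_eq_norm]
    have h8 : 8 * Real.sqrt η = Real.sqrt (64 * η) := by
      rw [Real.sqrt_mul (by norm_num : (0:ℝ) ≤ 64),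
        show (64:ℝ) = 8 ^ 2 by norm_num, Real.sqrt_sq (by norm_num : (0:ℝ) ≤ 8)]
    rw [h8]
    calc ‖y₁ - y₂‖ = Real.sqrt (‖y₁ - y₂‖ ^ 2) := (Real.sqrt_sq (norm_nonneg _)).symm
      _ ≤ Real.sqrt (64 * η) := Real.sqrt_le_sqrt hsq
end

section
/- Let F be a closed convex subset of R^d with r ≤ ||y|| for the minimum-norm point y of F and ||v|| ≤ R for all v ∈ F, where 0 < r ≤ R. Then the diameter of F is at most 2√(R² - r²). -/
open RealInnerProductSpace


/-- Diameter of a convex set sandwiched between two spheres: if the minimum-norm point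
`y` of a nonempty closed convex set `F ⊆ ℝ^d` satisfies `r ≤ ‖y‖`, and `‖v‖ ≤ R` for
all `v ∈ F`, with `0 < r ≤ R`, then `diam F ≤ 2√(R² - r²)`. -/
theorem stmt_17 (d : ℕ) (F : Set (EuclideanSpace ℝ (Fin d))) (hFc : IsClosed F)
    (hFconv : Convex ℝ F) (r R : ℝ) (hr : 0 < r) (hrR : r ≤ R)
    (y : EuclideanSpace ℝ (Fin d)) (hyF : y ∈ F)
    (hymin : ∀ v ∈ F, ‖y‖ ≤ ‖v‖) (hry : r ≤ ‖y‖)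
    (hR : ∀ v ∈ F, ‖v‖ ≤ R) :
    Metric.diam F ≤ 2 * Real.sqrt (R ^ 2 - r ^ 2) := by
  have hinf : ‖(0 : EuclideanSpace ℝ (Fin d)) - y‖ = ⨅ w : F, ‖(0 : EuclideanSpace ℝ (Fin d)) - w‖ := by
    haveI : Nonempty F := ⟨⟨y, hyF⟩⟩
    apply le_antisymm
    · apply le_ciInf
      intro w
      simpa using hymin w w.2
    · exact ciInf_le ⟨0, fun _ ⟨_, h⟩ => h ▸ norm_nonneg _⟩ (⟨y, hyF⟩ : F)
  have hineq := (norm_eq_iInf_iff_real_inner_le_zero hFconv hyF).1 hinf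
  -- for each v ∈ F, ‖v - y‖² ≤ R² - r²
  have key : ∀ v ∈ F, ‖v - y‖ ≤ Real.sqrt (R ^ 2 - r ^ 2) := by
    intro v hv
    have h1 : ⟪(0 : EuclideanSpace ℝ (Fin d)) - y, v - y⟫ ≤ 0 := hineq v hv
    have h2 : ‖y‖ ^ 2 ≤ ⟪y, v - y⟫ + ‖y‖ ^ 2 := by
      have : -⟪y, v - y⟫ ≤ 0 := by
        rw [zero_sub, inner_neg_left] at h1; linarith
      linarith
    have hexp : ‖v - y‖ ^ 2 = ‖v‖ ^ 2 - 2 * ⟪y, v - y⟫ - 2 * ‖y‖ ^ 2 + ‖y‖ ^ 2 := by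
      have := @norm_sub_sq_real (EuclideanSpace ℝ (Fin d)) _ _ v y
      have h3 : ⟪v, y⟫ = ⟪y, v - y⟫ + ‖y‖ ^ 2 := by
        rw [inner_sub_right, real_inner_self_eq_norm_sq, real_inner_comm]; ring
      rw [this, h3]; ring
    have hb : ‖v - y‖ ^ 2 ≤ R ^ 2 - r ^ 2 := by
      have hvR : ‖v‖ ^ 2 ≤ R ^ 2 := by
        have := hR v hv
        nlinarith [norm_nonneg v]
      have hyr : r ^ 2 ≤ ‖y‖ ^ 2 := by nlinarith [norm_nonneg y]
      nlinarith
    calc ‖v - y‖ = Real.sqrt (‖v - y‖ ^ 2) := by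
          rw [Real.sqrt_sq (norm_nonneg _)]
      _ ≤ Real.sqrt (R ^ 2 - r ^ 2) := Real.sqrt_le_sqrt hb
  apply Metric.diam_le_of_forall_dist_le (by positivity)
  intro u hu v hv
  calc dist u v ≤ dist u y + dist y v := dist_triangle _ _ _
    _ ≤ Real.sqrt (R ^ 2 - r ^ 2) + Real.sqrt (R ^ 2 - r ^ 2) := by
        gcongr
        · rw [dist_eq_norm]; exact key u hu
        · rw [dist_comm, dist_eq_norm]; exact key v hv
    _ = 2 * Real.sqrt (R ^ 2 - r ^ 2) := by ring
end
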